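/- arXiv:1807.09421 — 9 statements merged into one kernel-verified Lean document; each statement's English description precedes it below -/
import Mathlib

section
/- If e_{i_1,j_1}, ..., e_{i_m,j_m} are upper triangular matrix units (i_q ≤ j_q for all q) whose product in the given order equals e_{i_1,j_m} ≠ 0, then for any permutation σ of {1,...,m}, the product e_{i_{σ(1)},j_{σ(1)}} ⋯ e_{i_{σ(m)},j_{σ(m)}} is either 0 or equal to e_{i_1,j_m}. -/
/-!
A product of matrix units `e_{f 0, g 0} ⋯ e_{f m, g m}` is `e_{f 0, g m}` when consecutive
units link up (`g q = f (q + 1)`) and `0` otherwise. If the units are upper triangular and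
link up, then `f q ≤ g q = f (q + 1)`, so both index tuples are monotone. Hence a reordering
whose product is nonzero is again monotone, and a monotone rearrangement of a tuple is the
tuple itself: the reordered product is the original one.
-/

open Matrix

namespace Matrix

variable {ι : Type*}

def Composable {m : ℕ} (f g : Fin (m + 1) → ι) : Prop :=
  ∀ q : Fin m, g q.castSucc = f q.succ

theorem composable_succ_iff {m : ℕ} {f g : Fin (m + 2) → ι} :
    Composable f g ↔ g 0 = f 1 ∧ Composable (fun q => f q.succ) (fun q => g q.succ) := by
  simp only [Composable, Fin.forall_fin_succ, Fin.castSucc_zero, Fin.succ_zero_eq_one,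
    Fin.succ_castSucc]

theorem Composable.monotone_left [Preorder ι] {m : ℕ} {f g : Fin (m + 1) → ι}
    (h : Composable f g) (hfg : ∀ q, f q ≤ g q) : Monotone f :=
  Fin.monotone_iff_le_succ.mpr fun q => h q ▸ hfg q.castSucc

theorem Composable.monotone_right [Preorder ι] {m : ℕ} {f g : Fin (m + 1) → ι}
    (h : Composable f g) (hfg : ∀ q, f q ≤ g q) : Monotone g :=
  Fin.monotone_iff_le_succ.mpr fun q => (h q).le.trans (hfg q.succ)

open Classical in
theorem list_prod_ofFn_single_one [Fintype ι] [DecidableEq ι] {R : Type*} [Semiring R] :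
    ∀ {m : ℕ} (f g : Fin (m + 1) → ι),
      (List.ofFn fun q => single (f q) (g q) (1 : R)).prod =
        if Composable f g then single (f 0) (g (Fin.last m)) 1 else 0
  | 0, f, g => by simp [Composable]
  | m + 1, f, g => by
    rw [List.ofFn_succ, List.prod_cons, list_prod_ofFn_single_one (fun q => f q.succ),
      composable_succ_iff]
    by_cases hlink : g 0 = f 1 <;>
      by_cases htail : Composable (fun q => f q.succ) (fun q => g q.succ) <;>
      simp [hlink, htail, single_mul_single_of_ne]

end Matrix

theorem stmt0_general {K : Type*} [Field K] {n m : ℕ}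
    (i j : Fin (m + 1) → Fin n) (hij : ∀ q, i q ≤ j q)
    (hprod : (List.ofFn fun q => Matrix.single (i q) (j q) (1 : K)).prod
      = Matrix.single (i 0) (j (Fin.last m)) (1 : K))
    (σ : Equiv.Perm (Fin (m + 1))) :
    (List.ofFn fun q => Matrix.single (i (σ q)) (j (σ q)) (1 : K)).prod = 0 ∨
    (List.ofFn fun q => Matrix.single (i (σ q)) (j (σ q)) (1 : K)).prod
      = Matrix.single (i 0) (j (Fin.last m)) (1 : K) := by
  have hcomp : Composable i j := by
    by_contra h
    rw [list_prod_ofFn_single_one, if_neg h] at hprod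
    simpa using congr_fun₂ hprod (i 0) (j (Fin.last m))
  by_cases hσ : Composable (i ∘ σ) (j ∘ σ)
  · have hi : i ∘ σ = i :=
      Tuple.unique_monotone (τ := 1) (hσ.monotone_left fun q => hij (σ q))
        (hcomp.monotone_left hij)
    have hj : j ∘ σ = j :=
      Tuple.unique_monotone (τ := 1) (hσ.monotone_right fun q => hij (σ q))
        (hcomp.monotone_right hij)
    right
    calc _ = (List.ofFn fun q => single ((i ∘ σ) q) ((j ∘ σ) q) (1 : K)).prod := rfl
      _ = _ := by rw [hi, hj, hprod]
  · left
    exact (list_prod_ofFn_single_one (i ∘ σ) (j ∘ σ)).trans (if_neg hσ)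

/-- If upper triangular matrix units `e_{i_q, j_q}` (with `i_q ≤ j_q`)
multiply in the given order to `e_{i_1, j_m}`, then any reordered product is either `0`
or equal to `e_{i_1, j_m}`. -/
theorem stmt0 {K : Type*} [Field K] {n m : ℕ} (hn : 2 ≤ n)
    (i j : Fin (m + 1) → Fin n) (hij : ∀ q, i q ≤ j q)
    (hprod : (List.ofFn fun q => Matrix.single (i q) (j q) (1 : K)).prod
      = Matrix.single (i 0) (j (Fin.last m)) (1 : K))
    (σ : Equiv.Perm (Fin (m + 1))) :
    (List.ofFn fun q => Matrix.single (i (σ q)) (j (σ q)) (1 : K)).prod = 0 ∨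
    (List.ofFn fun q => Matrix.single (i (σ q)) (j (σ q)) (1 : K)).prod
      = Matrix.single (i 0) (j (Fin.last m)) (1 : K) :=
  stmt0_general i j hij hprod σ
end

section
/- If a nonzero scalar multiple of the matrix unit e_{i,i+k-1} equals an evaluation of a multilinear polynomial p on upper triangular matrix units, then every matrix unit e_{l, l+k-1} for l = 1, ..., n-k+1 (i.e., all matrix units on the same diagonal) lies in the image of p on UT_n. -/
/-!
Let `h` be the partial bijection `x ↦ x + i - l` of `Fin n` and let `compress h M` be the matrix
with entries `M (h x) (h y)`, and `0` where `h` is undefined, so that `compress h` maps `e_{i,i+d}`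
to `e_{l,l+d}`. The range of `h` is an interval, so for upper triangular `M`, `N` every index `z`
with `h x ≤ z ≤ h y` lies in it and no term of `(M * N) (h x) (h y)` is lost: `compress h` is
multiplicative on `UT_n`. Applying it to the matrix units of the given evaluation, and rescaling
one variable by `c⁻¹`, yields an evaluation equal to `e_{l,l+d}`. When `m = 0` the evaluation is a
scalar matrix, which for `n ≥ 2` is not a nonzero multiple of a matrix unit.
-/

open Matrix

section Multilinear

variable {R A : Type*} [CommSemiring R] [Semiring A] [Algebra R A] {m : ℕ}

def evalMultilinear (α : Equiv.Perm (Fin m) → R) (X : Fin m → A) : A :=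
  ∑ σ, α σ • (List.ofFn fun q => X (σ q)).prod

theorem List.prod_ofFn_smul : ∀ {m : ℕ} (a : Fin m → R) (X : Fin m → A),
    (List.ofFn fun q => a q • X q).prod = (∏ q, a q) • (List.ofFn X).prod
  | 0, _, _ => by simp
  | m + 1, a, X => by
    rw [List.ofFn_succ, List.ofFn_succ, List.prod_cons, List.prod_cons,
      List.prod_ofFn_smul (fun q => a q.succ) (fun q => X q.succ), Fin.prod_univ_succ,
      smul_mul_smul_comm]

theorem evalMultilinear_zero (α : Equiv.Perm (Fin 0) → R) (X : Fin 0 → A) :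
    evalMultilinear α X = (∑ σ, α σ) • 1 := by
  simp [evalMultilinear]

theorem evalMultilinear_mulSingle_smul (α : Equiv.Perm (Fin m) → R) (X : Fin m → A)
    (q₀ : Fin m) (a : R) :
    evalMultilinear α (fun q => (Pi.mulSingle q₀ a : Fin m → R) q • X q) =
      a • evalMultilinear α X := by
  simp only [evalMultilinear, Finset.smul_sum, List.prod_ofFn_smul,
    Equiv.prod_comp _ (Pi.mulSingle q₀ a : Fin m → R), Finset.prod_pi_mulSingle',
    Finset.mem_univ, if_true, smul_comm a]

end Multilinear

namespace PEquiv

theorem trans_ofSet_range {ι κ : Type*} (h : κ ≃. ι) :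
    h.trans (ofSet {a | (h.symm a).isSome}) = h := by
  ext x a
  rcases hx : h x with _ | b
  · simp [PEquiv.trans, hx]
  · have hb : (h.symm b).isSome := by rw [(h.eq_some_iff).2 hx]; rfl
    simp only [PEquiv.trans, coe_mk, hx, Option.bind_some, ofSet_eq_some_iff, Option.some_inj]
    exact ⟨fun h' => h'.1.symm, fun e => ⟨e.symm, e ▸ hb⟩⟩

end PEquiv

namespace Matrix

variable {ι κ R : Type*} [Fintype ι] [DecidableEq ι] [DecidableEq κ] [CommSemiring R]

def compress (h : κ ≃. ι) : Matrix ι ι R →ₗ[R] Matrix κ κ R where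
  toFun M := (h.toMatrix : Matrix κ ι R) * M * (h.symm.toMatrix : Matrix ι κ R)
  map_add' M N := by rw [Matrix.mul_add, Matrix.add_mul]
  map_smul' c M := by rw [Matrix.mul_smul, Matrix.smul_mul, RingHom.id_apply]

theorem compress_eq_mul (h : κ ≃. ι) (M : Matrix ι ι R) :
    compress h M = (h.toMatrix : Matrix κ ι R) * M * (h.symm.toMatrix : Matrix ι κ R) := rfl

theorem compress_apply (h : κ ≃. ι) (M : Matrix ι ι R) (x y : κ) :
    compress h M x y = Option.casesOn (h x) 0 fun a => Option.casesOn (h y) 0 fun b => M a b := by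
  rw [compress_eq_mul, PEquiv.mul_toMatrix_apply, PEquiv.symm_symm]
  rcases hy : h y with _ | b <;> rcases hx : h x with _ | a <;>
    simp [PEquiv.toMatrix_mul_apply, hx]

theorem compress_compress {ν : Type*} [DecidableEq ν] [Fintype κ] (g : ν ≃. κ) (h : κ ≃. ι)
    (M : Matrix ι ι R) :
    compress g (compress h M) = compress (g.trans h) M := by
  simp only [compress_eq_mul, PEquiv.symm_trans_rev, PEquiv.toMatrix_trans, Matrix.mul_assoc]

theorem compress_isUpperTriangular [LinearOrder ι] [LinearOrder κ] {h : κ ≃. ι}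
    (hmono : ∀ ⦃x y a b⦄, h x = some a → h y = some b → x < y → a < b) {M : Matrix ι ι R}
    (hM : M.IsUpperTriangular) : (compress h M).IsUpperTriangular := by
  intro x y hyx
  rw [compress_apply]
  rcases hx : h x with _ | a <;> rcases hy : h y with _ | b
  all_goals simp only
  exact hM (hmono hy hx hyx)

theorem compress_single {h : κ ≃. ι} {x y : κ} {a b : ι} (hx : h x = some a)
    (hy : h y = some b) (c : R) :
    compress h (single a b c) = single x y c := by
  have hxa (z : κ) : x = z ↔ h z = some a := ⟨by rintro rfl; exact hx, fun hz => h.inj hx hz⟩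
  have hyb (z : κ) : y = z ↔ h z = some b := ⟨by rintro rfl; exact hy, fun hz => h.inj hy hz⟩
  ext x' y'
  simp only [compress_apply, single_apply, hxa, hyb]
  rcases h x' with _ | a' <;> rcases h y' with _ | b' <;> simp [eq_comm]

theorem compress_ofSet_mul_toMatrix_mul [LinearOrder ι] {S : Set ι} [DecidablePred (· ∈ S)]
    (hS : S.OrdConnected) {M N : Matrix ι ι R} (hM : M.IsUpperTriangular)
    (hN : N.IsUpperTriangular) :
    compress (PEquiv.ofSet S) (M * (PEquiv.ofSet S).toMatrix * N) =
      compress (PEquiv.ofSet S) (M * N) := by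
  have hS' (c : ι) : PEquiv.ofSet S c = if c ∈ S then some c else none := rfl
  ext a b
  simp only [compress_apply, hS']
  by_cases ha : a ∈ S <;> by_cases hb : b ∈ S <;> simp only [ha, hb, if_true, if_false]
  rw [mul_apply, mul_apply]
  refine Finset.sum_congr rfl fun c _ => ?_
  rw [PEquiv.mul_toMatrix_apply, PEquiv.ofSet_symm, hS']
  by_cases hc : c ∈ S
  · simp [hc]
  rcases lt_or_ge c a with hca | hac
  · simp [hc, hM hca]
  · have hbc : b < c := lt_of_not_ge fun hcb => hc (hS.out ha hb ⟨hac, hcb⟩)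
    simp [hc, hN hbc]

theorem compress_mul [Fintype κ] [LinearOrder ι] {h : κ ≃. ι}
    (hrange : {a | (h.symm a).isSome}.OrdConnected) {M N : Matrix ι ι R}
    (hM : M.IsUpperTriangular) (hN : N.IsUpperTriangular) :
    compress h (M * N) = compress h M * compress h N := by
  set S := {a | (h.symm a).isSome}
  calc compress h (M * N) = compress h (compress (PEquiv.ofSet S) (M * N)) := by
        rw [compress_compress, PEquiv.trans_ofSet_range]
    _ = compress h (compress (PEquiv.ofSet S) (M * (PEquiv.ofSet S).toMatrix * N)) := by
        rw [compress_ofSet_mul_toMatrix_mul hrange hM hN]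
    _ = compress h (M * (PEquiv.ofSet S).toMatrix * N) := by
        rw [compress_compress, PEquiv.trans_ofSet_range]
    _ = compress h M * compress h N := by
        -- `h.symm.toMatrix * h.toMatrix` is the projection onto the range of `h`
        rw [← PEquiv.symm_trans_self, PEquiv.toMatrix_trans]
        simp only [compress_eq_mul, Matrix.mul_assoc]

theorem compress_list_prod [Fintype κ] [LinearOrder ι] {h : κ ≃. ι}
    (hrange : {a | (h.symm a).isSome}.OrdConnected) :
    ∀ {L : List (Matrix ι ι R)}, L ≠ [] → (∀ M ∈ L, M.IsUpperTriangular) →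
      compress h L.prod = (L.map (compress h)).prod
  | [M], _, _ => by simp
  | M :: N :: L, _, hL => by
    have hNL : (N :: L).prod.IsUpperTriangular :=
      list_prod_mem (S := blockTriangularSubsemiring R id) fun X hX => hL X (.tail M hX)
    rw [List.prod_cons, compress_mul hrange (hL M (.head _)) hNL,
      compress_list_prod hrange (List.cons_ne_nil N L) fun X hX => hL X (.tail M hX)]
    rfl

theorem compress_evalMultilinear [Fintype κ] [LinearOrder ι] {m : ℕ} [NeZero m] {h : κ ≃. ι}
    (hrange : {a | (h.symm a).isSome}.OrdConnected) (α : Equiv.Perm (Fin m) → R)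
    {X : Fin m → Matrix ι ι R} (hX : ∀ q, (X q).IsUpperTriangular) :
    compress h (evalMultilinear α X) = evalMultilinear α fun q => compress h (X q) := by
  simp only [evalMultilinear, map_sum, map_smul]
  refine Finset.sum_congr rfl fun σ _ => ?_
  rw [compress_list_prod hrange (by simpa using NeZero.ne m) (by simp [hX]), List.map_ofFn]
  rfl

theorem exists_evalMultilinear_eq_compress [Fintype κ] [LinearOrder ι] [LinearOrder κ] {m : ℕ}
    [NeZero m] {h : κ ≃. ι} (hrange : {a | (h.symm a).isSome}.OrdConnected)
    (hmono : ∀ ⦃x y a b⦄, h x = some a → h y = some b → x < y → a < b)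
    (α : Equiv.Perm (Fin m) → R) {X : Fin m → Matrix ι ι R} (hX : ∀ q, (X q).IsUpperTriangular)
    {c : R} (hc : IsUnit c) {M : Matrix ι ι R} (hXM : evalMultilinear α X = c • M) :
    ∃ Y : Fin m → Matrix κ κ R, (∀ q, (Y q).IsUpperTriangular) ∧
      evalMultilinear α Y = compress h M := by
  refine ⟨fun q => (Pi.mulSingle 0 ↑hc.unit⁻¹ : Fin m → R) q • compress h (X q),
    fun q _ _ hyx => ?_, ?_⟩
  · simp only [smul_apply, compress_isUpperTriangular hmono (hX q) hyx, smul_zero]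
  · rw [evalMultilinear_mulSingle_smul, ← compress_evalMultilinear hrange α hX, hXM, map_smul,
      smul_smul, IsUnit.val_inv_mul, one_smul]

theorem smul_one_ne_smul_single {ι R : Type*} [DecidableEq ι] [Nontrivial ι] [Semiring R]
    {c : R} (hc : c ≠ 0) (a : R) (i j : ι) : a • (1 : Matrix ι ι R) ≠ c • single i j 1 := by
  intro h
  obtain ⟨z, hz⟩ := exists_ne i
  have ha : a = 0 := by simpa [hz, single_apply, Ne.symm hz] using congrFun (congrFun h z) z
  exact hc (by simpa [ha, eq_comm] using congrFun (congrFun h i) j)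

end Matrix

namespace Fin

def shiftPEquiv (n a b : ℕ) : Fin n ≃. Fin n where
  toFun x := if h : a ≤ x + b ∧ x + b - a < n then some ⟨x + b - a, h.2⟩ else none
  invFun y := if h : b ≤ y + a ∧ y + a - b < n then some ⟨y + a - b, h.2⟩ else none
  inv x y := by
    split_ifs <;> simp [Fin.ext_iff] <;> omega

variable {n a b : ℕ}

theorem shiftPEquiv_eq_some_iff {x y : Fin n} :
    shiftPEquiv n a b x = some y ↔ (x : ℕ) + b = y + a := by
  simp only [shiftPEquiv, PEquiv.coe_mk]
  split_ifs <;> simp [Fin.ext_iff] <;> omega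

theorem shiftPEquiv_lt {x y x' y' : Fin n} (hx : shiftPEquiv n a b x = some x')
    (hy : shiftPEquiv n a b y = some y') (hxy : x < y) : x' < y' := by
  rw [shiftPEquiv_eq_some_iff] at hx hy
  rw [Fin.lt_def] at hxy ⊢
  omega

theorem ordConnected_shiftPEquiv_range :
    {y | ((shiftPEquiv n a b).symm y).isSome}.OrdConnected := by
  simp only [Option.isSome_iff_exists, PEquiv.eq_some_iff, shiftPEquiv_eq_some_iff]
  refine ⟨fun y₁ ⟨x₁, h₁⟩ y₂ ⟨x₂, h₂⟩ y ⟨hy₁, hy₂⟩ => ⟨⟨y + a - b, ?_⟩, ?_⟩⟩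
  all_goals rw [Fin.le_def] at hy₁ hy₂
  · have := x₂.isLt
    omega
  · rw [Fin.val_mk]
    omega

end Fin

/-- If a nonzero scalar multiple of `e_{i, i+d}` (a matrix unit on the
`(d+1)`-st diagonal, i.e. `d = k - 1`) is an evaluation of the multilinear polynomial
`p = Σ_σ α_σ x_{σ(1)} ⋯ x_{σ(m)}` on upper triangular matrix units, then every matrix
unit `e_{l, l+d}` on the same diagonal lies in the image of `p` on `UT_n`. -/
theorem stmt2 {K : Type*} [Field K] {n m : ℕ} (hn : 2 ≤ n)
    (α : Equiv.Perm (Fin m) → K)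
    (i d : ℕ) (hi : i < n) (hid : i + d < n)
    (c : K) (hc : c ≠ 0)
    (r s : Fin m → Fin n) (hrs : ∀ q, r q ≤ s q)
    (heval : (∑ σ : Equiv.Perm (Fin m), α σ •
        (List.ofFn fun q => Matrix.single (r (σ q)) (s (σ q)) (1 : K)).prod)
      = c • Matrix.single (⟨i, hi⟩ : Fin n) (⟨i + d, hid⟩ : Fin n) (1 : K)) :
    ∀ (l : ℕ) (hld : l + d < n),
      ∃ A : Fin m → Matrix (Fin n) (Fin n) K,
        (∀ q, ∀ a b : Fin n, b < a → A q a b = 0) ∧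
        (∑ σ : Equiv.Perm (Fin m), α σ •
            (List.ofFn fun q => A (σ q)).prod)
          = Matrix.single (⟨l, by omega⟩ : Fin n) (⟨l + d, hld⟩ : Fin n) (1 : K) := by
  intro l hld
  change evalMultilinear (A := Matrix (Fin n) (Fin n) K) α (fun q => single (r q) (s q) 1) = _
    at heval
  obtain rfl | hm := eq_or_ne m 0
  · have : Nontrivial (Fin n) := Fin.nontrivial_iff_two_le.2 hn
    rw [evalMultilinear_zero] at heval
    exact absurd heval (smul_one_ne_smul_single hc _ _ _)
  have : NeZero m := ⟨hm⟩
  have hl : Fin.shiftPEquiv n l i ⟨l, by omega⟩ = some ⟨i, hi⟩ :=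
    Fin.shiftPEquiv_eq_some_iff.2 (add_comm l i)
  have hld' : Fin.shiftPEquiv n l i ⟨l + d, hld⟩ = some ⟨i + d, hid⟩ :=
    Fin.shiftPEquiv_eq_some_iff.2 (by simp only; omega)
  rw [← compress_single hl hld']
  exact exists_evalMultilinear_eq_compress Fin.ordConnected_shiftPEquiv_range
    (fun _ _ _ _ => Fin.shiftPEquiv_lt) α (fun q => blockTriangular_single (hrs q) 1)
    hc.isUnit heval
end

section
/- If a nonzero scalar multiple of the matrix unit e_{i,i+k-1} equals an evaluation of a multilinear polynomial p on upper triangular matrix units, then e_{i,i+k} lies in the image of p on UT_n. -/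
open Matrix


section Aux
variable {K : Type*} [Field K] {n : ℕ}

private lemma chain_bound (l : List (Fin n × Fin n)) (hl : ∀ p ∈ l, p.1 ≤ p.2) :
    ∀ x y : Fin n,
    ((l.map fun p => Matrix.single p.1 p.2 (1:K)).prod) x y ≠ 0 →
    x ≤ y ∧ ∀ p ∈ l, x ≤ p.1 ∧ p.2 ≤ y := by
  induction l with
  | nil =>
    intro x y h
    simp only [List.map_nil, List.prod_nil] at h
    have hxy : x = y := by
      by_contra hne
      rw [Matrix.one_apply_ne hne] at h
      exact h rfl
    exact ⟨le_of_eq hxy, by simp⟩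
  | cons p t ih =>
    intro x y h
    simp only [List.map_cons, List.prod_cons] at h
    by_cases hx : x = p.1
    · subst hx
      rw [Matrix.single_mul_apply_same, one_mul] at h
      have hps : p.1 ≤ p.2 := hl p (by simp)
      have hrec := ih (fun q hq => hl q (by simp [hq])) p.2 y h
      refine ⟨le_trans hps hrec.1, ?_⟩
      intro q hq
      rcases List.mem_cons.mp hq with rfl | hq'
      · exact ⟨le_refl _, hrec.1⟩
      · obtain ⟨h1, h2⟩ := hrec.2 q hq'
        exact ⟨le_trans hps h1, h2⟩
    · rw [Matrix.single_mul_apply_of_ne 1 p.1 p.2 x y hx] at h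
      exact absurd rfl h

private lemma conj_list (P Q : Matrix (Fin n) (Fin n) K) (hQP : Q * P = 1) (hPQ : P * Q = 1) :
    ∀ l : List (Matrix (Fin n) (Fin n) K),
      (l.map fun X => P * X * Q).prod = P * l.prod * Q := by
  intro l
  induction l with
  | nil => simp [hPQ]
  | cons X t ih =>
    simp only [List.map_cons, List.prod_cons, ih]
    rw [Matrix.mul_assoc (P * X) Q _, ← Matrix.mul_assoc Q (P * t.prod) Q,
      ← Matrix.mul_assoc Q P t.prod, hQP, Matrix.one_mul, ← Matrix.mul_assoc,
      Matrix.mul_assoc P X t.prod]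

private lemma smul_list :
    ∀ l : List (K × Matrix (Fin n) (Fin n) K),
      (l.map fun p => p.1 • p.2).prod = (l.map Prod.fst).prod • (l.map Prod.snd).prod := by
  intro l
  induction l with
  | nil => simp
  | cons p t ih =>
    simp only [List.map_cons, List.prod_cons, ih, smul_mul_assoc, mul_smul_comm, smul_smul, mul_comm]

private lemma prod_const_absorb (X Y : Matrix (Fin n) (Fin n) K) (hYX : Y * X = Y) :
    ∀ k, Y * (List.ofFn fun _ : Fin k => X).prod = Y := by
  intro k
  induction k with
  | zero => simp
  | succ k ih =>
    rw [List.ofFn_succ, List.prod_cons, ← Matrix.mul_assoc, hYX, ih]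

private lemma prod_one_special (X Y : Matrix (Fin n) (Fin n) K)
    (hXX : X * X = X) (hXY : X * Y = Y) (hYX : Y * X = Y) :
    ∀ (m : ℕ) (j0 : Fin m), (List.ofFn fun q => if q = j0 then Y else X).prod = Y := by
  intro m
  induction m with
  | zero => exact fun j0 => j0.elim0
  | succ m ih =>
    intro j0
    rw [List.ofFn_succ, List.prod_cons]
    rcases Fin.eq_zero_or_eq_succ j0 with h0 | ⟨j, rfl⟩
    · subst h0
      rw [if_pos rfl]
      have he : (List.ofFn fun q : Fin m => if q.succ = (0 : Fin (m+1)) then Y else X)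
          = List.ofFn fun _ : Fin m => X :=
        congrArg List.ofFn (funext fun q => if_neg (Fin.succ_ne_zero q))
      rw [he, prod_const_absorb X Y hYX]
    · rw [if_neg (Fin.succ_ne_zero j).symm]
      have he : (List.ofFn fun q : Fin m => if q.succ = j.succ then Y else X)
          = List.ofFn fun q : Fin m => if q = j then Y else X :=
        congrArg List.ofFn (funext fun q => by simp [Fin.succ_inj])
      rw [he, ih j, hXY]

end Aux

section Aux2
variable {K : Type*} [Field K] {n : ℕ}

private def gfun (n i d : ℕ) (hid : i + d + 1 < n) : Fin n → Fin n := fun a =>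
  ⟨if a.1 ≤ i then a.1 else if a.1 ≤ i + d then a.1 + 1 else if a.1 = i + d + 1 then i + 1 else a.1,
   by have := a.2; split_ifs <;> omega⟩

private lemma gfun_inj (i d : ℕ) (hid : i + d + 1 < n) :
    Function.Injective (gfun n i d hid) := by
  intro a b hab
  have h := congrArg Fin.val hab
  simp only [gfun] at h
  apply Fin.ext
  split_ifs at h <;> omega

private def permMat (K : Type*) [Field K] {n : ℕ} (g : Fin n → Fin n) :
    Matrix (Fin n) (Fin n) K :=
  Matrix.of fun x y => if x = g y then 1 else 0

private lemma permMat_tmul {g : Fin n → Fin n} (hg : Function.Injective g) :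
    (permMat K g)ᵀ * permMat K g = 1 := by
  ext x y
  simp only [Matrix.mul_apply, Matrix.transpose_apply, permMat, Matrix.of_apply,
    Matrix.one_apply, ite_mul, one_mul, zero_mul]
  rw [Finset.sum_ite_eq' Finset.univ (g x) (fun z => if z = g y then (1:K) else 0)]
  simp [hg.eq_iff]

private lemma permMat_mul_std (g : Fin n → Fin n) (a b : Fin n) (w : K) :
    permMat K g * Matrix.single a b w = Matrix.single (g a) b w := by
  ext x y
  rw [Matrix.mul_apply, Finset.sum_eq_single a]
  · simp only [permMat, Matrix.of_apply, Matrix.single]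
    split_ifs <;> simp_all
  · intro u _ hu
    simp only [permMat, Matrix.of_apply, Matrix.single]
    split_ifs <;> simp_all
  · simp

private lemma std_mul_permMat_t (g : Fin n → Fin n) (a b : Fin n) (w : K) :
    Matrix.single a b w * (permMat K g)ᵀ = Matrix.single a (g b) w := by
  ext x y
  rw [Matrix.mul_apply, Finset.sum_eq_single b]
  · simp only [permMat, Matrix.transpose_apply, Matrix.of_apply, Matrix.single]
    split_ifs <;> simp_all
  · intro u _ hu
    simp only [permMat, Matrix.transpose_apply, Matrix.of_apply, Matrix.single]
    split_ifs <;> simp_all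
  · simp

end Aux2

/-- If a nonzero scalar multiple of `e_{i, i+d}` (with `d = k - 1`) is an
evaluation of the multilinear polynomial `p` on upper triangular matrix units, then
`e_{i, i+d+1}` lies in the image of `p` on `UT_n`. -/
theorem stmt3 {K : Type*} [Field K] {n m : ℕ} (hn : 2 ≤ n)
    (α : Equiv.Perm (Fin m) → K)
    (i d : ℕ) (hi : i < n) (hid : i + d + 1 < n)
    (c : K) (hc : c ≠ 0)
    (r s : Fin m → Fin n) (hrs : ∀ q, r q ≤ s q)
    (heval : (∑ σ : Equiv.Perm (Fin m), α σ •
        (List.ofFn fun q => Matrix.single (r (σ q)) (s (σ q)) (1 : K)).prod)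
      = c • Matrix.single (⟨i, hi⟩ : Fin n) (⟨i + d, by omega⟩ : Fin n) (1 : K)) :
    ∃ A : Fin m → Matrix (Fin n) (Fin n) K,
      (∀ q, ∀ a b : Fin n, b < a → A q a b = 0) ∧
      (∑ σ : Equiv.Perm (Fin m), α σ • (List.ofFn fun q => A (σ q)).prod)
        = Matrix.single (⟨i, hi⟩ : Fin n) (⟨i + d + 1, hid⟩ : Fin n) (1 : K) := by
  classical
  by_cases hm0 : m = 0
  · -- degenerate case: contradiction
    exfalso
    subst hm0
    have hev : (∑ σ : Equiv.Perm (Fin 0), α σ) • (1 : Matrix (Fin n) (Fin n) K)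
        = c • Matrix.single (⟨i, hi⟩ : Fin n) (⟨i + d, by omega⟩ : Fin n) (1:K) := by
      rw [← heval, Finset.sum_smul]
      refine Finset.sum_congr rfl fun σ _ => ?_
      simp
    obtain ⟨j, hj⟩ : ∃ j : Fin n, j ≠ (⟨i, hi⟩ : Fin n) := by
      rcases Nat.eq_zero_or_pos i with h0 | h0
      · exact ⟨⟨1, by omega⟩, Fin.ne_of_val_ne (show (1:ℕ) ≠ i by omega)⟩
      · exact ⟨⟨0, by omega⟩, Fin.ne_of_val_ne (show (0:ℕ) ≠ i by omega)⟩
    have h2 := congrFun (congrFun hev j) j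
    simp only [Matrix.smul_apply, Matrix.one_apply_eq, smul_eq_mul, mul_one,
      Matrix.single_apply_of_row_ne (Ne.symm hj), mul_zero] at h2
    have h1 := congrFun (congrFun hev ⟨i, hi⟩) ⟨i + d, by omega⟩
    rw [h2] at h1
    simp only [zero_smul, Matrix.zero_apply, Matrix.smul_apply, zero_mul,
      Matrix.single_apply_same, smul_eq_mul, mul_one] at h1
    exact hc h1.symm
  · have hm : 0 < m := Nat.pos_of_ne_zero hm0
    -- containment of all indices in the window [i, i+d]
    have hwin : ∀ q, i ≤ (r q : ℕ) ∧ (s q : ℕ) ≤ i + d := by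
      intro q1
      by_contra hq1
      have hz : ∀ σ : Equiv.Perm (Fin m),
          ((List.ofFn fun q => Matrix.single (r (σ q)) (s (σ q)) (1:K)).prod)
            (⟨i, hi⟩ : Fin n) (⟨i + d, by omega⟩ : Fin n) = 0 := by
        intro σ
        by_contra hne
        have hmap : (List.ofFn fun q => Matrix.single (r (σ q)) (s (σ q)) (1:K))
            = (List.ofFn fun q => (r (σ q), s (σ q))).map
                (fun p => Matrix.single p.1 p.2 (1:K)) := by
          rw [List.map_ofFn]; rfl
        rw [hmap] at hne
        obtain ⟨-, h2⟩ := chain_bound _ (by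
          intro p hp
          rw [List.mem_ofFn] at hp
          obtain ⟨q, rfl⟩ := hp
          exact hrs _) _ _ hne
        have hmem : (r q1, s q1) ∈ List.ofFn fun q => (r (σ q), s (σ q)) := by
          rw [List.mem_ofFn]
          exact ⟨σ.symm q1, by simp⟩
        obtain ⟨ha, hb⟩ := h2 _ hmem
        exact hq1 ⟨ha, hb⟩
      have h1 := congrFun (congrFun heval ⟨i, hi⟩) ⟨i + d, by omega⟩
      simp only [Matrix.sum_apply, Matrix.smul_apply, hz, smul_eq_mul, mul_zero,
        Finset.sum_const_zero, Matrix.single_apply_same, mul_one] at h1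
      exact hc h1.symm
    by_cases hd : d = 0
    · -- case d = 0
      subst hd
      have hri : ∀ q, r q = (⟨i, hi⟩ : Fin n) := by
        intro q
        have h1 := (hwin q).1
        have h2 := (hwin q).2
        have h3 : (r q : ℕ) ≤ (s q : ℕ) := hrs q
        exact Fin.ext (show (r q : ℕ) = i by omega)
      have hsi : ∀ q, s q = (⟨i, hi⟩ : Fin n) := by
        intro q
        have h1 := (hwin q).1
        have h2 := (hwin q).2
        have h3 : (r q : ℕ) ≤ (s q : ℕ) := hrs q
        exact Fin.ext (show (s q : ℕ) = i by omega)
      obtain ⟨k, rfl⟩ : ∃ k, m = k + 1 := ⟨m - 1, by omega⟩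
      set j1 : Fin n := ⟨i + 0 + 1, hid⟩ with hj1
      set D : Matrix (Fin n) (Fin n) K :=
        Matrix.single (⟨i, hi⟩ : Fin n) (⟨i, hi⟩ : Fin n) (1:K)
          + Matrix.single j1 j1 (1:K) with hD
      set F : Matrix (Fin n) (Fin n) K :=
        Matrix.single (⟨i, hi⟩ : Fin n) j1 (1:K) with hF
      have hne : (⟨i, hi⟩ : Fin n) ≠ j1 := Fin.ne_of_val_ne (show i ≠ i + 0 + 1 by omega)
      have hDD : D * D = D := by
        rw [hD, add_mul, mul_add, mul_add]
        simp [hne, hne.symm]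
      have hDF : D * F = F := by
        rw [hD, hF, add_mul]
        simp [hne, hne.symm]
      have hFD : F * D = F := by
        rw [hD, hF, mul_add]
        simp [hne, hne.symm]
      have hEE : Matrix.single (⟨i, hi⟩ : Fin n) (⟨i, hi⟩ : Fin n) (1:K)
          * Matrix.single (⟨i, hi⟩ : Fin n) (⟨i, hi⟩ : Fin n) (1:K)
          = Matrix.single (⟨i, hi⟩ : Fin n) (⟨i, hi⟩ : Fin n) (1:K) := by
        simp
      have hsum : (∑ σ : Equiv.Perm (Fin (k+1)), α σ) = c := by
        have hp : ∀ σ : Equiv.Perm (Fin (k+1)),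
            (List.ofFn fun q => Matrix.single (r (σ q)) (s (σ q)) (1:K)).prod
              = Matrix.single (⟨i, hi⟩ : Fin n) (⟨i, hi⟩ : Fin n) (1:K) := by
          intro σ
          have he : (List.ofFn fun q => Matrix.single (r (σ q)) (s (σ q)) (1:K))
              = List.ofFn fun _ : Fin (k+1) =>
                  Matrix.single (⟨i, hi⟩ : Fin n) (⟨i, hi⟩ : Fin n) (1:K) :=
            congrArg List.ofFn (funext fun q => by rw [hri, hsi])
          rw [he, List.ofFn_succ, List.prod_cons, prod_const_absorb _ _ hEE]
        have h1 := congrFun (congrFun heval ⟨i, hi⟩) ⟨i + 0, by omega⟩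
        simp only [hp, Matrix.sum_apply, Matrix.smul_apply, smul_eq_mul,
          Matrix.single_apply_same, mul_one] at h1
        convert h1 using 2
        simp
      set q0 : Fin (k+1) := 0 with hq0
      refine ⟨fun q => if q = q0 then c⁻¹ • F else D, ?_, ?_⟩
      · intro q a b hba
        have t1 : ¬((⟨i, hi⟩ : Fin n) = a ∧ j1 = b) := by
          rintro ⟨rfl, rfl⟩
          exact absurd (show (i + 0 + 1 : ℕ) < i from hba) (by omega)
        have t2 : ¬((⟨i, hi⟩ : Fin n) = a ∧ (⟨i, hi⟩ : Fin n) = b) := by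
          rintro ⟨rfl, rfl⟩
          exact lt_irrefl _ hba
        have t3 : ¬(j1 = a ∧ j1 = b) := by
          rintro ⟨rfl, rfl⟩
          exact lt_irrefl _ hba
        have z1 := Matrix.single_apply_of_ne (⟨i, hi⟩ : Fin n) j1 (1:K) a b t1
        have z2 := Matrix.single_apply_of_ne (⟨i, hi⟩ : Fin n) (⟨i, hi⟩ : Fin n) (1:K) a b t2
        have z3 := Matrix.single_apply_of_ne j1 j1 (1:K) a b t3
        show (if q = q0 then c⁻¹ • F else D) a b = 0
        split_ifs
        · simp [hF, z1]
        · simp [hD, z2, z3]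
      · have hprod : ∀ σ : Equiv.Perm (Fin (k+1)),
            (List.ofFn fun q => if σ q = q0 then c⁻¹ • F else D).prod = c⁻¹ • F := by
          intro σ
          have he : (List.ofFn fun q => if σ q = q0 then c⁻¹ • F else D)
              = List.ofFn fun q => if q = σ.symm q0 then c⁻¹ • F else D :=
            congrArg List.ofFn (funext fun q => by
              by_cases h : σ q = q0
              · rw [if_pos h, if_pos ((Equiv.apply_eq_iff_eq_symm_apply σ).mp h)]
              · rw [if_neg h, if_neg
                  (fun hh => h ((Equiv.apply_eq_iff_eq_symm_apply σ).mpr hh))])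
          rw [he]
          exact prod_one_special D (c⁻¹ • F) hDD
            (by rw [mul_smul_comm, hDF]) (by rw [smul_mul_assoc, hFD]) _ _
        simp only [hprod]
        rw [← Finset.sum_smul, hsum, smul_smul, mul_inv_cancel₀ hc, one_smul]
    · -- case d ≥ 1
      set g : Fin n → Fin n := gfun n i d hid with hg
      have hginj : Function.Injective g := gfun_inj i d hid
      set P : Matrix (Fin n) (Fin n) K := permMat K g with hP
      have hPtP : Pᵀ * P = 1 := permMat_tmul hginj
      have hPPt : P * Pᵀ = 1 := mul_eq_one_comm.mp hPtP
      have gmono : ∀ a b : Fin n, i ≤ (a:ℕ) → a ≤ b → (b:ℕ) ≤ i + d → (g a : ℕ) ≤ (g b : ℕ) := by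
        intro a b h1 h2 h3
        have h2' : (a:ℕ) ≤ (b:ℕ) := h2
        simp only [hg, gfun]
        split_ifs <;> omega
      set q0 : Fin m := ⟨0, hm⟩ with hq0
      refine ⟨fun q => (if q = q0 then c⁻¹ else 1) •
          Matrix.single (g (r q)) (g (s q)) (1:K), ?_, ?_⟩
      · intro q a b hba
        have hle : (g (r q) : ℕ) ≤ (g (s q) : ℕ) :=
          gmono _ _ (hwin q).1 (hrs q) (hwin q).2
        have hcon : ¬(g (r q) = a ∧ g (s q) = b) := by
          rintro ⟨rfl, rfl⟩
          rw [Fin.lt_def] at hba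
          omega
        have z := Matrix.single_apply_of_ne (g (r q)) (g (s q)) (1:K) a b hcon
        show (if q = q0 then c⁻¹ else 1) • Matrix.single (g (r q)) (g (s q)) (1:K) a b = 0
        simp [z]
      · have hstep : ∀ σ : Equiv.Perm (Fin m),
            (List.ofFn fun q => (if σ q = q0 then c⁻¹ else 1) •
                Matrix.single (g (r (σ q))) (g (s (σ q))) (1:K)).prod
              = c⁻¹ • (P *
                  (List.ofFn fun q => Matrix.single (r (σ q)) (s (σ q)) (1:K)).prod
                  * Pᵀ) := by
          intro σ
          have h1 : (List.ofFn fun q => (if σ q = q0 then c⁻¹ else 1) •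
                Matrix.single (g (r (σ q))) (g (s (σ q))) (1:K))
              = (List.ofFn fun q => ((if σ q = q0 then c⁻¹ else 1),
                  Matrix.single (g (r (σ q))) (g (s (σ q))) (1:K))).map
                    (fun p => p.1 • p.2) := by
            rw [List.map_ofFn]; rfl
          rw [h1, smul_list, List.map_ofFn, List.map_ofFn]
          have hcoef : (List.ofFn fun q =>
              (Prod.fst ∘ fun q => ((if σ q = q0 then c⁻¹ else 1),
                Matrix.single (g (r (σ q))) (g (s (σ q))) (1:K))) q).prod = c⁻¹ := by
            simp only [Function.comp]
            rw [List.prod_ofFn]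
            rw [Equiv.prod_comp σ (fun q => if q = q0 then c⁻¹ else 1)]
            simp
          rw [hcoef]
          have h2 : (List.ofFn fun q =>
              (Prod.snd ∘ fun q => ((if σ q = q0 then c⁻¹ else 1),
                Matrix.single (g (r (σ q))) (g (s (σ q))) (1:K))) q)
              = (List.ofFn fun q => Matrix.single (r (σ q)) (s (σ q)) (1:K)).map
                  (fun X => P * X * Pᵀ) := by
            rw [List.map_ofFn]
            refine congrArg List.ofFn (funext fun q => ?_)
            simp only [Function.comp]
            rw [permMat_mul_std, std_mul_permMat_t]
          rw [h2, conj_list P Pᵀ hPtP hPPt]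
        have hmain : (∑ σ : Equiv.Perm (Fin m), α σ •
              (List.ofFn fun q => (if σ q = q0 then c⁻¹ else 1) •
                Matrix.single (g (r (σ q))) (g (s (σ q))) (1:K)).prod)
            = c⁻¹ • (P * (∑ σ : Equiv.Perm (Fin m), α σ •
                (List.ofFn fun q => Matrix.single (r (σ q)) (s (σ q)) (1:K)).prod)
                * Pᵀ) := by
          rw [Matrix.mul_sum, Matrix.sum_mul, Finset.smul_sum]
          refine Finset.sum_congr rfl fun σ _ => ?_
          rw [hstep σ, mul_smul_comm, smul_mul_assoc, smul_comm (α σ) c⁻¹]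
        rw [hmain, heval, mul_smul_comm, smul_mul_assoc, smul_smul, inv_mul_cancel₀ hc,
          one_smul, permMat_mul_std, std_mul_permMat_t]
        have e1 : g ⟨i, hi⟩ = ⟨i, hi⟩ := Fin.ext (by simp [hg, gfun])
        have e2 : g ⟨i + d, by omega⟩ = ⟨i + d + 1, hid⟩ := by
          apply Fin.ext
          simp only [hg, gfun]
          rw [if_neg (by omega), if_pos (le_refl _)]
        rw [e1, e2]
end

section
/- Let p(x_1,...,x_m) = Σ_{σ ∈ S_m} α_σ x_{σ(1)}⋯x_{σ(m)} be a multilinear polynomial with Σ_σ α_σ ≠ 0. Then the image of p on UT_n is all of UT_n. -/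
/-!
A multilinear polynomial `p` with coefficients `α_σ` maps upper triangular matrices to upper
triangular matrices, since these form a subalgebra. Conversely, evaluating `p` at
`(B, 1, …, 1)` gives `(∑ σ, α_σ) • B`, so every upper triangular `X` is the value of `p` at
`((∑ σ, α_σ)⁻¹ • X, 1, …, 1)`.
-/

open Matrix

theorem List.prod_ofFn_update_one {M : Type*} [Monoid M] :
    ∀ {m : ℕ} (i : Fin m) (b : M), (List.ofFn (Function.update (1 : Fin m → M) i b)).prod = b
  | _ + 1, i, b => by
    rw [List.ofFn_succ, List.prod_cons]
    cases i using Fin.cases with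
    | zero => simp [List.ofFn_const]
    | succ j =>
      have hshift : (fun q => Function.update (1 : Fin _ → M) j.succ b q.succ) =
          Function.update (1 : Fin _ → M) j b :=
        Function.update_comp_eq_of_injective _ (Fin.succ_injective _) j b
      rw [Function.update_of_ne (Fin.succ_ne_zero j).symm, hshift, prod_ofFn_update_one j b,
        Pi.one_apply, one_mul]

section MultilinearPolynomial

variable {R A : Type*} [CommSemiring R] [Semiring A] [Algebra R A] {m : ℕ}

def multilinearPoly (α : Equiv.Perm (Fin m) → R) (x : Fin m → A) : A :=
  ∑ σ : Equiv.Perm (Fin m), α σ • (List.ofFn fun q => x (σ q)).prod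

theorem multilinearPoly_mem (S : Subalgebra R A) (α : Equiv.Perm (Fin m) → R)
    {x : Fin m → A} (hx : ∀ q, x q ∈ S) : multilinearPoly α x ∈ S :=
  S.sum_mem fun σ _ => S.smul_mem
    (S.list_prod_mem fun _ hy => by obtain ⟨q, rfl⟩ := List.mem_ofFn.1 hy; exact hx _) _

theorem multilinearPoly_update_one (α : Equiv.Perm (Fin m) → R) (i : Fin m) (b : A) :
    multilinearPoly α (Function.update 1 i b) = (∑ σ, α σ) • b := by
  simp only [multilinearPoly, Finset.sum_smul]
  refine Finset.sum_congr rfl fun σ _ => ?_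
  rw [← Function.comp_def, Function.update_comp_equiv, Pi.one_comp,
    List.prod_ofFn_update_one]

theorem Subalgebra.update_one_mem (S : Subalgebra R A) (i : Fin m) {b : A} (hb : b ∈ S)
    (q : Fin m) : Function.update (1 : Fin m → A) i b q ∈ S := by
  rcases eq_or_ne q i with rfl | hq
  · rwa [Function.update_self]
  · rw [Function.update_of_ne hq]; exact S.one_mem

end MultilinearPolynomial

theorem stmt5_general {K : Type*} [Field K] {n m : ℕ} (hm : 2 ≤ m)
    (α : Equiv.Perm (Fin m) → K)
    (hsum : (∑ σ : Equiv.Perm (Fin m), α σ) ≠ 0) :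
    {X : Matrix (Fin n) (Fin n) K | ∃ A : Fin m → Matrix (Fin n) (Fin n) K,
        (∀ q, ∀ a b : Fin n, b < a → A q a b = 0) ∧
        X = ∑ σ : Equiv.Perm (Fin m), α σ • (List.ofFn fun q => A (σ q)).prod}
      = {X : Matrix (Fin n) (Fin n) K | ∀ a b : Fin n, b < a → X a b = 0} := by
  let UT := blockTriangularSubalgebra K K (id : Fin n → Fin n)
  ext X
  constructor
  · rintro ⟨A, hA, rfl⟩ a b hab
    exact multilinearPoly_mem UT α (fun q => fun _ _ h => hA q _ _ h) hab
  · intro hX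
    let B := (∑ σ, α σ)⁻¹ • X
    have hB : B ∈ UT := UT.smul_mem (fun _ _ h => hX _ _ h) _
    refine ⟨Function.update 1 ⟨0, by omega⟩ B,
      fun q _ _ h => UT.update_one_mem _ hB q h, ?_⟩
    change X = multilinearPoly α _
    rw [multilinearPoly_update_one, smul_inv_smul₀ hsum]

/-- If `Σ_σ α_σ ≠ 0`, then the image of the multilinear polynomial
`p = Σ_σ α_σ x_{σ(1)} ⋯ x_{σ(m)}` on `UT_n` is all of `UT_n`. -/
theorem stmt5 {K : Type*} [Field K] {n m : ℕ} (hn : 2 ≤ n) (hm : 2 ≤ m)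
    (α : Equiv.Perm (Fin m) → K)
    (hsum : (∑ σ : Equiv.Perm (Fin m), α σ) ≠ 0) :
    {X : Matrix (Fin n) (Fin n) K | ∃ A : Fin m → Matrix (Fin n) (Fin n) K,
        (∀ q, ∀ a b : Fin n, b < a → A q a b = 0) ∧
        X = ∑ σ : Equiv.Perm (Fin m), α σ • (List.ofFn fun q => A (σ q)).prod}
      = {X : Matrix (Fin n) (Fin n) K | ∀ a b : Fin n, b < a → X a b = 0} :=
  stmt5_general hm α hsum
end

section
/- For every strictly upper triangular n×n matrix A, there exists an upper triangular matrix C such that A = BC - CB, where B = Σ_{k=1}^{n-1} e_{k,k+1}. -/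
/-!
With `B` the upper shift matrix, `(B * C) i j = C (i+1) j` and `(C * B) i j = C i (j-1)` (zero when the
index leaves the range), so `A = B * C - C * B` becomes the recursion `C (i+1) j = A i j + C i (j-1)`,
`C 0 j = 0`. Its solution sums `A` along the diagonal through `(i-1, j)` going up and to the left, so it
vanishes strictly below the main diagonal because `A` vanishes on and below it. In the last row the
equation reads `0 - C (n-1) (j-1) = A (n-1) j`, where both sides vanish for the same reason.
-/

open Matrix

section

variable {R : Type*} {n : ℕ}

/-- `diagonalPrefixSum a i j = ∑ t ≤ min (i - 1) j, a (i - 1 - t) (j - t)`, and `0` for `i = 0`. -/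
def diagonalPrefixSum [Add R] [Zero R] (a : ℕ → ℕ → R) : ℕ → ℕ → R
  | 0, _ => 0
  | i + 1, 0 => a i 0
  | i + 1, j + 1 => a i (j + 1) + diagonalPrefixSum a i j

theorem diagonalPrefixSum_succ [AddZeroClass R] (a : ℕ → ℕ → R) (i j : ℕ) :
    diagonalPrefixSum a (i + 1) j = a i j + if j = 0 then 0 else diagonalPrefixSum a i (j - 1) := by
  cases j <;> simp [diagonalPrefixSum]

theorem diagonalPrefixSum_eq_zero_of_lt [AddZeroClass R] {a : ℕ → ℕ → R}
    (ha : ∀ i j, j ≤ i → a i j = 0) {i j : ℕ} (hji : j < i) : diagonalPrefixSum a i j = 0 := by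
  induction i generalizing j with
  | zero => omega
  | succ i ih =>
    rw [diagonalPrefixSum_succ, ha i j (by omega)]
    split_ifs
    · simp
    · simp [ih (by omega : j - 1 < i)]

def upperShift (n : ℕ) (R : Type*) [Zero R] [One R] : Matrix (Fin n) (Fin n) R :=
  of fun i j => if (j : ℕ) = i + 1 then 1 else 0

theorem sum_single_succ_eq_upperShift [AddCommMonoid R] [One R] :
    (∑ k : Fin n, if h : (k : ℕ) + 1 < n then single k (⟨(k : ℕ) + 1, h⟩ : Fin n) (1 : R) else 0)
      = upperShift n R := by
  ext i j
  rw [Matrix.sum_apply, Fintype.sum_eq_single i]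
  · split_ifs with h
    · simp [upperShift, single_apply, Fin.ext_iff, eq_comm]
    · simp [upperShift]; omega
  · intro k hk
    split_ifs <;> simp [hk]

theorem upperShift_mul_apply [NonAssocSemiring R] (M : Matrix (Fin n) (Fin n) R) (i j : Fin n) :
    (upperShift n R * M) i j = if h : (i : ℕ) + 1 < n then M ⟨i + 1, h⟩ j else 0 := by
  split_ifs with h
  · rw [mul_apply, Fintype.sum_eq_single ⟨i + 1, h⟩] <;> simp +contextual [upperShift, Fin.ext_iff]
  · rw [mul_apply]; refine Finset.sum_eq_zero fun k _ => ?_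
    simp [upperShift]; omega

theorem mul_upperShift_apply [NonAssocSemiring R] (M : Matrix (Fin n) (Fin n) R) (i j : Fin n) :
    (M * upperShift n R) i j = if (j : ℕ) = 0 then 0 else M i ⟨j - 1, by omega⟩ := by
  split_ifs with h
  · rw [mul_apply]; refine Finset.sum_eq_zero fun k _ => ?_
    simp [upperShift]; omega
  · rw [mul_apply, Fintype.sum_eq_single ⟨j - 1, by omega⟩]
    · simp [upperShift]; omega
    · intro k hk; simp [upperShift, Fin.ext_iff] at hk ⊢; omega

theorem exists_upperTriangular_eq_upperShift_commutator [Ring R] (A : Matrix (Fin n) (Fin n) R)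
    (hA : ∀ i j, j ≤ i → A i j = 0) :
    ∃ C : Matrix (Fin n) (Fin n) R,
      (∀ i j, j < i → C i j = 0) ∧ A = upperShift n R * C - C * upperShift n R := by
  let a : ℕ → ℕ → R := fun i j => if h : i < n ∧ j < n then A ⟨i, h.1⟩ ⟨j, h.2⟩ else 0
  have ha : ∀ i j, j ≤ i → a i j = 0 := by
    intro i j hji
    simp only [a]
    split_ifs
    exacts [hA _ _ hji, rfl]
  have ha_apply (i j : Fin n) : a i j = A i j := by simp [a]
  refine ⟨of fun i j => diagonalPrefixSum a i j, fun i j h => diagonalPrefixSum_eq_zero_of_lt ha h, ?_⟩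
  ext i j
  rw [Matrix.sub_apply, upperShift_mul_apply, mul_upperShift_apply]
  by_cases hi : (i : ℕ) + 1 < n
  · rw [dif_pos hi]
    simp only [of_apply, diagonalPrefixSum_succ, ha_apply]
    split_ifs <;> simp
  · have hAij : A i j = 0 := hA i j (by omega)
    rw [dif_neg hi, hAij]
    split_ifs with hj
    · simp
    · simp [diagonalPrefixSum_eq_zero_of_lt ha (by omega : (j : ℕ) - 1 < i)]

end

theorem stmt8_general {K : Type*} [Field K] {n : ℕ}
    (A : Matrix (Fin n) (Fin n) K)
    (hA : ∀ a b : Fin n, b ≤ a → A a b = 0) :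
    ∃ C : Matrix (Fin n) (Fin n) K,
      (∀ a b : Fin n, b < a → C a b = 0) ∧
      A = (∑ k : Fin n, if h : (k : ℕ) + 1 < n then
              Matrix.single k (⟨(k : ℕ) + 1, h⟩ : Fin n) (1 : K) else 0) * C
        - C * (∑ k : Fin n, if h : (k : ℕ) + 1 < n then
              Matrix.single k (⟨(k : ℕ) + 1, h⟩ : Fin n) (1 : K) else 0) := by
  rw [sum_single_succ_eq_upperShift]
  exact exists_upperTriangular_eq_upperShift_commutator A hA

/-- For every strictly upper triangular `n × n` matrix `A` there is an
upper triangular matrix `C` with `A = BC - CB`, where `B = Σ_{k=1}^{n-1} e_{k,k+1}`. -/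
theorem stmt8 {K : Type*} [Field K] {n : ℕ} (hn : 2 ≤ n)
    (A : Matrix (Fin n) (Fin n) K)
    (hA : ∀ a b : Fin n, b ≤ a → A a b = 0) :
    ∃ C : Matrix (Fin n) (Fin n) K,
      (∀ a b : Fin n, b < a → C a b = 0) ∧
      A = (∑ k : Fin n, if h : (k : ℕ) + 1 < n then
              Matrix.single k (⟨(k : ℕ) + 1, h⟩ : Fin n) (1 : K) else 0) * C
        - C * (∑ k : Fin n, if h : (k : ℕ) + 1 < n then
              Matrix.single k (⟨(k : ℕ) + 1, h⟩ : Fin n) (1 : K) else 0) :=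
  stmt8_general A hA
end

section
/- Let p(x,y) = αxy + βyx be a nonzero multilinear polynomial of degree two over a field K. Then the image of p on UT_n is UT_n if α + β ≠ 0, and is exactly the set UT_n^{(0)} of strictly upper triangular matrices if α + β = 0. -/
/-!
Upper triangular matrices are closed under products, and the diagonal of `AB` is the product of
the diagonals, so `p(A, B) = α AB + β BA` is upper triangular with diagonal entries
`(α + β) aᵢᵢ bᵢᵢ`. When `α + β ≠ 0` every upper triangular `X` is `p(1, (α + β)⁻¹ X)`.
When `α + β = 0` we have `p(A, B) = α [A, B]`, whose diagonal vanishes; conversely every strictly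
upper triangular `X` is a commutator `[S, B]` with `S` the nilpotent shift matrix, because
`([S, B])ᵢⱼ = Bᵢ₊₁,ⱼ - Bᵢ,ⱼ₋₁` and this recursion can be solved for `B` along each diagonal.
-/

open Matrix

namespace Matrix

variable {m R : Type*}

def IsStrictUpperTriangular [LE m] [Zero R] (M : Matrix m m R) : Prop :=
  ∀ ⦃i j⦄, j ≤ i → M i j = 0

theorem BlockTriangular.smul {α S : Type*} [LT α] {b : m → α} [Zero R] [SMulZeroClass S R]
    {M : Matrix m m R} (hM : M.BlockTriangular b) (c : S) : (c • M).BlockTriangular b :=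
  fun _ _ h => by rw [smul_apply, hM h, smul_zero]

section Triangular

variable [LinearOrder m] [Fintype m] [NonUnitalNonAssocSemiring R] {A B : Matrix m m R}

theorem IsUpperTriangular.mul_apply_self (hA : A.IsUpperTriangular) (hB : B.IsUpperTriangular)
    (i : m) : (A * B) i i = A i i * B i i := by
  rw [mul_apply]
  refine Fintype.sum_eq_single i fun k hk => ?_
  rcases lt_or_gt_of_ne hk with h | h
  · rw [hA h, zero_mul]
  · rw [hB h, mul_zero]

theorem IsStrictUpperTriangular.mul_isUpperTriangular (hA : A.IsStrictUpperTriangular)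
    (hB : B.IsUpperTriangular) : (A * B).IsStrictUpperTriangular := by
  intro i j hji
  rw [mul_apply]
  refine Finset.sum_eq_zero fun k _ => ?_
  rcases le_or_gt k i with h | h
  · rw [hA h, zero_mul]
  · rw [hB (hji.trans_lt h), mul_zero]

theorem IsUpperTriangular.mul_isStrictUpperTriangular (hA : A.IsUpperTriangular)
    (hB : B.IsStrictUpperTriangular) : (A * B).IsStrictUpperTriangular := by
  intro i j hji
  rw [mul_apply]
  refine Finset.sum_eq_zero fun k _ => ?_
  rcases lt_or_ge k i with h | h
  · rw [hA h, zero_mul]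
  · rw [hB (hji.trans h), mul_zero]

end Triangular

section DegreeTwo

variable [LinearOrder m] [Fintype m] [CommSemiring R] {A B : Matrix m m R}

theorem IsUpperTriangular.smul_mul_add_smul_mul (hA : A.IsUpperTriangular)
    (hB : B.IsUpperTriangular) (α β : R) : (α • (A * B) + β • (B * A)).IsUpperTriangular :=
  ((hA.mul hB).smul α).add ((hB.mul hA).smul β)

theorem IsUpperTriangular.smul_mul_add_smul_mul_apply_self (hA : A.IsUpperTriangular)
    (hB : B.IsUpperTriangular) (α β : R) (i : m) :
    (α • (A * B) + β • (B * A)) i i = (α + β) * (A i i * B i i) := by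
  rw [add_apply, smul_apply, smul_apply, hA.mul_apply_self hB, hB.mul_apply_self hA, smul_eq_mul,
    smul_eq_mul]
  ring

end DegreeTwo

section Shift

variable {n : ℕ}

def shiftMatrix (n : ℕ) (R : Type*) [Zero R] [One R] : Matrix (Fin n) (Fin n) R :=
  of fun i j => if (i : ℕ) + 1 = j then 1 else 0

theorem isStrictUpperTriangular_shiftMatrix [Zero R] [One R] :
    (shiftMatrix n R).IsStrictUpperTriangular :=
  fun i j h => if_neg (by omega)

section NonAssocSemiring

variable [NonAssocSemiring R]

theorem shiftMatrix_mul_apply (B : Matrix (Fin n) (Fin n) R) {i k : Fin n} (h : (i : ℕ) + 1 = k)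
    (j : Fin n) : (shiftMatrix n R * B) i j = B k j := by
  rw [mul_apply, Fintype.sum_eq_single k fun l hl => ?_]
  · simp [shiftMatrix, h]
  · have : (i : ℕ) + 1 ≠ l := fun h' => hl (Fin.ext (h'.symm.trans h))
    simp [shiftMatrix, this]

theorem mul_shiftMatrix_apply (B : Matrix (Fin n) (Fin n) R) {k j : Fin n} (h : (k : ℕ) + 1 = j)
    (i : Fin n) : (B * shiftMatrix n R) i j = B i k := by
  rw [mul_apply, Fintype.sum_eq_single k fun l hl => ?_]
  · simp [shiftMatrix, h]
  · have : (l : ℕ) + 1 ≠ j := fun h' => hl (Fin.ext (by omega))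
    simp [shiftMatrix, this]

end NonAssocSemiring

def shiftCommutatorSolution [Zero R] [Add R] (y : ℕ → ℕ → R) : ℕ → ℕ → R
  | 0, _ => 0
  | _ + 1, 0 => 0
  | i + 1, j + 1 => shiftCommutatorSolution y i j + y i (j + 1)

theorem shiftCommutatorSolution_eq_zero_of_lt [AddZeroClass R] {y : ℕ → ℕ → R}
    (hy : ∀ a b, b ≤ a → y a b = 0) : ∀ {i j : ℕ}, j < i → shiftCommutatorSolution y i j = 0
  | _ + 1, 0, _ => rfl
  | i + 1, j + 1, h => by
    rw [shiftCommutatorSolution, shiftCommutatorSolution_eq_zero_of_lt hy (by omega),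
      hy _ _ (by omega), add_zero]

theorem exists_isUpperTriangular_shiftMatrix_mul_sub_mul_shiftMatrix_eq [Ring R]
    {X : Matrix (Fin n) (Fin n) R} (hX : X.IsStrictUpperTriangular) :
    ∃ B : Matrix (Fin n) (Fin n) R,
      B.IsUpperTriangular ∧ shiftMatrix n R * B - B * shiftMatrix n R = X := by
  let y : ℕ → ℕ → R := fun a b => if h : a < n ∧ b < n then X ⟨a, h.1⟩ ⟨b, h.2⟩ else 0
  have hy : ∀ a b, b ≤ a → y a b = 0 := by
    intro a b hba
    dsimp only [y]
    split_ifs with h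
    exacts [hX (Fin.mk_le_mk.2 hba), rfl]
  let B : Matrix (Fin n) (Fin n) R := of fun i j => shiftCommutatorSolution y i j
  have hB : B.IsUpperTriangular := fun i j h => shiftCommutatorSolution_eq_zero_of_lt hy h
  refine ⟨B, hB, ext fun i j => ?_⟩
  rcases le_or_gt j i with hji | hij
  · rw [sub_apply, isStrictUpperTriangular_shiftMatrix.mul_isUpperTriangular hB hji,
      hB.mul_isStrictUpperTriangular isStrictUpperTriangular_shiftMatrix hji, hX hji, sub_zero]
  · obtain ⟨k, hk⟩ : ∃ k : Fin n, (k : ℕ) + 1 = j := ⟨⟨j - 1, by omega⟩, by simp; omega⟩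
    rw [sub_apply, shiftMatrix_mul_apply B (k := ⟨i + 1, by omega⟩) rfl, mul_shiftMatrix_apply B hk]
    simp only [B, of_apply, ← hk, shiftCommutatorSolution]
    simp [y, hk]

end Shift

end Matrix

theorem stmt9_general {K : Type*} [Field K] {n : ℕ}
    (α β : K) (hp : ¬(α = 0 ∧ β = 0)) :
    (α + β ≠ 0 →
      {X : Matrix (Fin n) (Fin n) K | ∃ A B : Matrix (Fin n) (Fin n) K,
          (∀ a b : Fin n, b < a → A a b = 0) ∧ (∀ a b : Fin n, b < a → B a b = 0) ∧
          X = α • (A * B) + β • (B * A)}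
        = {X : Matrix (Fin n) (Fin n) K | ∀ a b : Fin n, b < a → X a b = 0}) ∧
    (α + β = 0 →
      {X : Matrix (Fin n) (Fin n) K | ∃ A B : Matrix (Fin n) (Fin n) K,
          (∀ a b : Fin n, b < a → A a b = 0) ∧ (∀ a b : Fin n, b < a → B a b = 0) ∧
          X = α • (A * B) + β • (B * A)}
        = {X : Matrix (Fin n) (Fin n) K | ∀ a b : Fin n, b ≤ a → X a b = 0}) := by
  refine ⟨fun hs => Set.ext fun X => ⟨?_, fun hX => ?_⟩,
    fun hs => Set.ext fun X => ⟨?_, fun hX => ?_⟩⟩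
  · rintro ⟨A, B, hA, hB, rfl⟩ i j h
    exact IsUpperTriangular.smul_mul_add_smul_mul (fun i j h => hA i j h) (fun i j h => hB i j h)
      α β h
  · refine ⟨1, (α + β)⁻¹ • X, fun i j h => one_apply_ne h.ne', fun i j h => by simp [hX i j h], ?_⟩
    rw [Matrix.one_mul, Matrix.mul_one, smul_smul, smul_smul, ← add_smul, ← add_mul,
      mul_inv_cancel₀ hs, one_smul]
  · rintro ⟨A, B, hA, hB, rfl⟩ i j hji
    have hA' : A.IsUpperTriangular := fun i j h => hA i j h
    have hB' : B.IsUpperTriangular := fun i j h => hB i j h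
    rcases hji.lt_or_eq with h | rfl
    · exact hA'.smul_mul_add_smul_mul hB' α β h
    · rw [hA'.smul_mul_add_smul_mul_apply_self hB', hs, zero_mul]
  · have hα : α ≠ 0 := fun h => hp ⟨h, by linear_combination hs - h⟩
    obtain ⟨B, hB, hSB⟩ :=
      exists_isUpperTriangular_shiftMatrix_mul_sub_mul_shiftMatrix_eq fun i j h => hX i j h
    refine ⟨shiftMatrix n K, α⁻¹ • B, fun i j h => isStrictUpperTriangular_shiftMatrix h.le,
      fun i j h => by simp [hB h], ?_⟩
    rw [← hSB, eq_neg_of_add_eq_zero_right hs]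
    simp [smul_smul, hα, sub_eq_add_neg]

/-- For the nonzero multilinear polynomial `p(x,y) = αxy + βyx` over a
field `K`, the image of `p` on `UT_n` is `UT_n` when `α + β ≠ 0`, and is exactly the set
`UT_n^{(0)}` of strictly upper triangular matrices when `α + β = 0`. -/
theorem stmt9 {K : Type*} [Field K] {n : ℕ} (hn : 2 ≤ n)
    (α β : K) (hp : ¬(α = 0 ∧ β = 0)) :
    (α + β ≠ 0 →
      {X : Matrix (Fin n) (Fin n) K | ∃ A B : Matrix (Fin n) (Fin n) K,
          (∀ a b : Fin n, b < a → A a b = 0) ∧ (∀ a b : Fin n, b < a → B a b = 0) ∧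
          X = α • (A * B) + β • (B * A)}
        = {X : Matrix (Fin n) (Fin n) K | ∀ a b : Fin n, b < a → X a b = 0}) ∧
    (α + β = 0 →
      {X : Matrix (Fin n) (Fin n) K | ∃ A B : Matrix (Fin n) (Fin n) K,
          (∀ a b : Fin n, b < a → A a b = 0) ∧ (∀ a b : Fin n, b < a → B a b = 0) ∧
          X = α • (A * B) + β • (B * A)}
        = {X : Matrix (Fin n) (Fin n) K | ∀ a b : Fin n, b ≤ a → X a b = 0}) :=
  stmt9_general α β hp
end

section
/- Let K be a field with at least n elements and p(x,y,z) a multilinear polynomial of degree three over K. Then the image of p on UT_n is {0}, UT_n^{(0)}, or UT_n. -/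
open Matrix

namespace Stmt12Aux

private def pl : Fin 6 → Equiv.Perm (Fin 3) :=
 ![1, Equiv.swap 0 1, Equiv.swap 0 2, Equiv.swap 1 2,
   Equiv.swap 0 1 * Equiv.swap 1 2, Equiv.swap 1 2 * Equiv.swap 0 1]

lemma sum_perm_fin3 {M : Type*} [AddCommMonoid M] (F : Equiv.Perm (Fin 3) → M) :
    ∑ σ : Equiv.Perm (Fin 3), F σ =
      F 1 + F (Equiv.swap 0 1) + F (Equiv.swap 0 2) + F (Equiv.swap 1 2)
        + F (Equiv.swap 0 1 * Equiv.swap 1 2) + F (Equiv.swap 1 2 * Equiv.swap 0 1) := by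
  rw [← Fintype.sum_bijective pl (by decide) _ F (fun _ => rfl), Fin.sum_univ_six]
  rfl

lemma pv1 (k : Fin 3) : (1 : Equiv.Perm (Fin 3)) k = k := rfl
lemma pv2a : (Equiv.swap 0 1 : Equiv.Perm (Fin 3)) 0 = 1 := by decide
lemma pv2b : (Equiv.swap 0 1 : Equiv.Perm (Fin 3)) 1 = 0 := by decide
lemma pv2c : (Equiv.swap 0 1 : Equiv.Perm (Fin 3)) 2 = 2 := by decide
lemma pv3a : (Equiv.swap 0 2 : Equiv.Perm (Fin 3)) 0 = 2 := by decide
lemma pv3b : (Equiv.swap 0 2 : Equiv.Perm (Fin 3)) 1 = 1 := by decide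
lemma pv3c : (Equiv.swap 0 2 : Equiv.Perm (Fin 3)) 2 = 0 := by decide
lemma pv4a : (Equiv.swap 1 2 : Equiv.Perm (Fin 3)) 0 = 0 := by decide
lemma pv4b : (Equiv.swap 1 2 : Equiv.Perm (Fin 3)) 1 = 2 := by decide
lemma pv4c : (Equiv.swap 1 2 : Equiv.Perm (Fin 3)) 2 = 1 := by decide
lemma pv5a : (Equiv.swap 0 1 * Equiv.swap 1 2 : Equiv.Perm (Fin 3)) 0 = 1 := by decide
lemma pv5b : (Equiv.swap 0 1 * Equiv.swap 1 2 : Equiv.Perm (Fin 3)) 1 = 2 := by decide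
lemma pv5c : (Equiv.swap 0 1 * Equiv.swap 1 2 : Equiv.Perm (Fin 3)) 2 = 0 := by decide
lemma pv6a : (Equiv.swap 1 2 * Equiv.swap 0 1 : Equiv.Perm (Fin 3)) 0 = 2 := by decide
lemma pv6b : (Equiv.swap 1 2 * Equiv.swap 0 1 : Equiv.Perm (Fin 3)) 1 = 0 := by decide
lemma pv6c : (Equiv.swap 1 2 * Equiv.swap 0 1 : Equiv.Perm (Fin 3)) 2 = 1 := by decide

lemma tri_mul' {K : Type*} [Field K] {n : ℕ} {U V : Matrix (Fin n) (Fin n) K}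
    (hU : ∀ a b, b < a → U a b = 0)
    (hV : ∀ a b, b < a → V a b = 0) : ∀ a b, b < a → (U * V) a b = 0 := by
  intro a b h
  rw [Matrix.mul_apply]
  apply Finset.sum_eq_zero
  intro i _
  rcases lt_or_ge i a with h' | h'
  · rw [hU a i h', zero_mul]
  · rw [hV i b (lt_of_lt_of_le h h'), mul_zero]

lemma tri_diag {K : Type*} [Field K] {n : ℕ} {U V : Matrix (Fin n) (Fin n) K}
    (hU : ∀ a b, b < a → U a b = 0)
    (hV : ∀ a b, b < a → V a b = 0) (a : Fin n) : (U * V) a a = U a a * V a a := by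
  rw [Matrix.mul_apply, Finset.sum_eq_single a]
  · intro i _ hia
    rcases lt_or_gt_of_ne hia with h' | h'
    · rw [hU a i h', zero_mul]
    · rw [hV i a h', mul_zero]
  · simp

/-- evaluations are upper triangular -/
lemma sum_tri {K : Type*} [Field K] {n : ℕ} (α : Equiv.Perm (Fin 3) → K)
    (A : Fin 3 → Matrix (Fin n) (Fin n) K)
    (hA : ∀ q, ∀ a b : Fin n, b < a → A q a b = 0) :
    ∀ a b : Fin n, b < a →
      (∑ σ : Equiv.Perm (Fin 3), α σ • (A (σ 0) * A (σ 1) * A (σ 2))) a b = 0 := by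
  intro a b hba
  rw [Matrix.sum_apply]
  apply Finset.sum_eq_zero
  intro σ _
  rw [Matrix.smul_apply, tri_mul' (tri_mul' (hA _) (hA _)) (hA _) a b hba, smul_zero]

/-- diagonal entries vanish when `∑ α = 0` -/
lemma diag_zero {K : Type*} [Field K] {n : ℕ} (α : Equiv.Perm (Fin 3) → K)
    (hβ : ∑ σ : Equiv.Perm (Fin 3), α σ = 0)
    (A : Fin 3 → Matrix (Fin n) (Fin n) K)
    (hA : ∀ q, ∀ a b : Fin n, b < a → A q a b = 0) (a : Fin n) :
    (∑ σ : Equiv.Perm (Fin 3), α σ • (A (σ 0) * A (σ 1) * A (σ 2))) a a = 0 := by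
  have hprod : ∀ σ : Equiv.Perm (Fin 3),
      (A (σ 0) * A (σ 1) * A (σ 2)) a a = A 0 a a * A 1 a a * A 2 a a := by
    intro σ
    rw [tri_diag (tri_mul' (hA _) (hA _)) (hA _), tri_diag (hA _) (hA _)]
    rw [← Fin.prod_univ_three (fun k => A (σ k) a a), ← Fin.prod_univ_three (fun k => A k a a)]
    exact Equiv.prod_comp σ (fun k => A k a a)
  rw [Matrix.sum_apply]
  have : ∀ σ ∈ (Finset.univ : Finset (Equiv.Perm (Fin 3))),
      (α σ • (A (σ 0) * A (σ 1) * A (σ 2))) a a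
        = α σ * (A 0 a a * A 1 a a * A 2 a a) := by
    intro σ _
    rw [Matrix.smul_apply, smul_eq_mul, hprod σ]
  rw [Finset.sum_congr rfl this, ← Finset.sum_mul, hβ, zero_mul]

lemma transfer {K : Type*} [Field K] {n : ℕ} (α : Equiv.Perm (Fin 3) → K)
    (ρ : Equiv.Perm (Fin 3)) (X : Matrix (Fin n) (Fin n) K)
    (A : Fin 3 → Matrix (Fin n) (Fin n) K)
    (hA : ∀ q, ∀ a b : Fin n, b < a → A q a b = 0)
    (h : X = ∑ σ : Equiv.Perm (Fin 3), α (ρ * σ) • (A (σ 0) * A (σ 1) * A (σ 2))) :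
    ∃ A' : Fin 3 → Matrix (Fin n) (Fin n) K,
        (∀ q, ∀ a b : Fin n, b < a → A' q a b = 0) ∧
        X = ∑ σ : Equiv.Perm (Fin 3), α σ • (A' (σ 0) * A' (σ 1) * A' (σ 2)) := by
  refine ⟨fun q => A (ρ⁻¹ q), fun q => hA _, ?_⟩
  rw [h, ← Equiv.sum_comp (Equiv.mulLeft ρ)
    (fun σ : Equiv.Perm (Fin 3) => α σ • (A (ρ⁻¹ (σ 0)) * A (ρ⁻¹ (σ 1)) * A (ρ⁻¹ (σ 2))))]
  apply Finset.sum_congr rfl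
  intro σ _
  simp [Equiv.Perm.mul_apply]

lemma core {K : Type*} [Field K] {n : ℕ} (f : Fin n → K) (hf : Function.Injective f)
    (α : Equiv.Perm (Fin 3) → K) (hβ : ∑ σ : Equiv.Perm (Fin 3), α σ = 0)
    (hα1 : α 1 ≠ 0)
    (X : Matrix (Fin n) (Fin n) K) (hX : ∀ a b : Fin n, b ≤ a → X a b = 0) :
    ∃ A : Fin 3 → Matrix (Fin n) (Fin n) K,
        (∀ q, ∀ a b : Fin n, b < a → A q a b = 0) ∧
        X = ∑ σ : Equiv.Perm (Fin 3), α σ • (A (σ 0) * A (σ 1) * A (σ 2)) := by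
  set P := α (Equiv.swap 0 1) + α (Equiv.swap 0 1 * Equiv.swap 1 2) with hP
  set Q := α (1 : Equiv.Perm (Fin 3)) with hQ
  set R := α (Equiv.swap 0 2) with hR
  set S := α (Equiv.swap 1 2) + α (Equiv.swap 1 2 * Equiv.swap 0 1) with hS
  have hsum : P + Q + R + S = 0 := by
    rw [sum_perm_fin3] at hβ
    rw [hP, hQ, hR, hS]; linear_combination hβ
  obtain ⟨d, e, hde⟩ : ∃ d e : Fin n → K, ∀ a b : Fin n, a ≠ b →
      P * (d b * e b) + Q * (d a * e b) + R * (e a * d b) + S * (d a * e a) ≠ 0 := by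
    by_cases hγ : P + Q ≠ 0
    · refine ⟨fun _ => 1, f, fun a b hab => ?_⟩
      have : P * (1 * f b) + Q * (1 * f b) + R * (f a * 1) + S * (1 * f a)
          = (P + Q) * (f b - f a) := by linear_combination (f a) * hsum
      rw [this]
      exact mul_ne_zero hγ (sub_ne_zero.2 (fun h => hab (hf h).symm))
    · push_neg at hγ
      by_cases hδ : P + R ≠ 0
      · refine ⟨f, fun _ => 1, fun a b hab => ?_⟩
        have : P * (f b * 1) + Q * (f a * 1) + R * (1 * f b) + S * (f a * 1)
            = (P + R) * (f b - f a) := by linear_combination (f a) * hsum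
        rw [this]
        exact mul_ne_zero hδ (sub_ne_zero.2 (fun h => hab (hf h).symm))
      · push_neg at hδ
        refine ⟨f, f, fun a b hab => ?_⟩
        have : P * (f b * f b) + Q * (f a * f b) + R * (f a * f b) + S * (f a * f a)
            = P * (f b - f a) * (f b - f a) := by
          linear_combination (f a * f a) * hsum + (f a * f b - f a * f a) * hγ
            + (f a * f b - f a * f a) * hδ
        rw [this]
        have hPne : P ≠ 0 := by
          intro h; apply hα1; rw [hQ] at *; linear_combination hγ - h
        have hne : f b - f a ≠ 0 := sub_ne_zero.2 (fun h => hab (hf h).symm)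
        exact mul_ne_zero (mul_ne_zero hPne hne) hne
  set g : Fin n → Fin n → K := fun a b =>
    P * (d b * e b) + Q * (d a * e b) + R * (e a * d b) + S * (d a * e a) with hg
  refine ⟨![Matrix.diagonal d, Matrix.of (fun a b => (g a b)⁻¹ * X a b), Matrix.diagonal e],
    ?_, ?_⟩
  · intro q a b hba
    have hab : a ≠ b := (ne_of_lt hba).symm
    fin_cases q
    · simp [Matrix.diagonal_apply_ne _ hab]
    · simp [hX a b (le_of_lt hba)]
    · simp [Matrix.diagonal_apply_ne _ hab]
  · ext a b
    rw [sum_perm_fin3]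
    simp only [pv1, pv2a, pv2b, pv2c, pv3a, pv3b, pv3c, pv4a, pv4b, pv4c,
      pv5a, pv5b, pv5c, pv6a, pv6b, pv6c,
      Matrix.cons_val_zero, Matrix.cons_val_one, Matrix.head_cons,
      Matrix.cons_val_two, Matrix.tail_cons,
      Matrix.add_apply, Matrix.smul_apply, smul_eq_mul,
      Matrix.diagonal_mul, Matrix.mul_diagonal, Matrix.diagonal_mul_diagonal,
      Matrix.of_apply]
    by_cases hab : a < b
    · have hgne : g a b ≠ 0 := hde a b (ne_of_lt hab)
      have key : α 1 * (d a * ((g a b)⁻¹ * X a b) * e b)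
          + α (Equiv.swap 0 1) * ((g a b)⁻¹ * X a b * d b * e b)
          + α (Equiv.swap 0 2) * (e a * ((g a b)⁻¹ * X a b) * d b)
          + α (Equiv.swap 1 2) * (d a * e a * ((g a b)⁻¹ * X a b))
          + α (Equiv.swap 0 1 * Equiv.swap 1 2) * ((g a b)⁻¹ * X a b * e b * d b)
          + α (Equiv.swap 1 2 * Equiv.swap 0 1) * (e a * d a * ((g a b)⁻¹ * X a b))
          = g a b * ((g a b)⁻¹ * X a b) := by
        rw [hg, hP, hQ, hR, hS]; ring
      rw [key, ← mul_assoc, mul_inv_cancel₀ hgne, one_mul]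
    · have hX0 : X a b = 0 := hX a b (not_lt.1 hab)
      rw [hX0]; ring

lemma beta_ne_case {K : Type*} [Field K] {n : ℕ} (α : Equiv.Perm (Fin 3) → K)
    (hβ : ∑ σ : Equiv.Perm (Fin 3), α σ ≠ 0)
    (X : Matrix (Fin n) (Fin n) K) (hX : ∀ a b : Fin n, b < a → X a b = 0) :
    ∃ A : Fin 3 → Matrix (Fin n) (Fin n) K,
        (∀ q, ∀ a b : Fin n, b < a → A q a b = 0) ∧
        X = ∑ σ : Equiv.Perm (Fin 3), α σ • (A (σ 0) * A (σ 1) * A (σ 2)) := by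
  set β := ∑ σ : Equiv.Perm (Fin 3), α σ with hβdef
  refine ⟨![β⁻¹ • X, 1, 1], ?_, ?_⟩
  · intro q a b hba
    have hab : a ≠ b := (ne_of_lt hba).symm
    fin_cases q
    · simp [hX a b hba]
    · simp [Matrix.one_apply_ne hab]
    · simp [Matrix.one_apply_ne hab]
  · rw [sum_perm_fin3]
    simp only [pv1, pv2a, pv2b, pv2c, pv3a, pv3b, pv3c, pv4a, pv4b, pv4c,
      pv5a, pv5b, pv5c, pv6a, pv6b, pv6c,
      Matrix.cons_val_zero, Matrix.cons_val_one, Matrix.head_cons,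
      Matrix.cons_val_two, Matrix.tail_cons, one_mul, mul_one, smul_smul]
    rw [← add_smul, ← add_smul, ← add_smul, ← add_smul, ← add_smul]
    rw [show α 1 * β⁻¹ + α (Equiv.swap 0 1) * β⁻¹ + α (Equiv.swap 0 2) * β⁻¹
        + α (Equiv.swap 1 2) * β⁻¹ + α (Equiv.swap 0 1 * Equiv.swap 1 2) * β⁻¹
        + α (Equiv.swap 1 2 * Equiv.swap 0 1) * β⁻¹ = 1 from ?_, one_smul]
    have h6 : α 1 + α (Equiv.swap 0 1) + α (Equiv.swap 0 2) + α (Equiv.swap 1 2)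
        + α (Equiv.swap 0 1 * Equiv.swap 1 2) + α (Equiv.swap 1 2 * Equiv.swap 0 1) = β := by
      rw [hβdef, sum_perm_fin3]
    field_simp
    linear_combination h6

end Stmt12Aux

open Stmt12Aux in
/-- Over a field with at least `n` elements, the image of a multilinear
polynomial `p = Σ_{σ ∈ S_3} α_σ x_{σ(1)} x_{σ(2)} x_{σ(3)}` of degree three on `UT_n` is
`{0}`, `UT_n^{(0)}` or `UT_n`. -/
theorem stmt12 {K : Type*} [Field K] {n : ℕ} (hn : 2 ≤ n)
    (hK : ∃ f : Fin n → K, Function.Injective f)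
    (α : Equiv.Perm (Fin 3) → K) :
    {X : Matrix (Fin n) (Fin n) K | ∃ A : Fin 3 → Matrix (Fin n) (Fin n) K,
        (∀ q, ∀ a b : Fin n, b < a → A q a b = 0) ∧
        X = ∑ σ : Equiv.Perm (Fin 3), α σ • (A (σ 0) * A (σ 1) * A (σ 2))}
      = {0} ∨
    {X : Matrix (Fin n) (Fin n) K | ∃ A : Fin 3 → Matrix (Fin n) (Fin n) K,
        (∀ q, ∀ a b : Fin n, b < a → A q a b = 0) ∧
        X = ∑ σ : Equiv.Perm (Fin 3), α σ • (A (σ 0) * A (σ 1) * A (σ 2))}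
      = {X : Matrix (Fin n) (Fin n) K | ∀ a b : Fin n, b ≤ a → X a b = 0} ∨
    {X : Matrix (Fin n) (Fin n) K | ∃ A : Fin 3 → Matrix (Fin n) (Fin n) K,
        (∀ q, ∀ a b : Fin n, b < a → A q a b = 0) ∧
        X = ∑ σ : Equiv.Perm (Fin 3), α σ • (A (σ 0) * A (σ 1) * A (σ 2))}
      = {X : Matrix (Fin n) (Fin n) K | ∀ a b : Fin n, b < a → X a b = 0} := by
  by_cases hβ : ∑ σ : Equiv.Perm (Fin 3), α σ ≠ 0
  · right; right
    ext X
    simp only [Set.mem_setOf_eq]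
    constructor
    · rintro ⟨A, hA, rfl⟩
      exact sum_tri α A hA
    · intro hX
      exact beta_ne_case α hβ X hX
  · push_neg at hβ
    by_cases hα : ∀ σ : Equiv.Perm (Fin 3), α σ = 0
    · left
      ext X
      simp only [Set.mem_setOf_eq, Set.mem_singleton_iff]
      constructor
      · rintro ⟨A, hA, rfl⟩
        apply Finset.sum_eq_zero
        intro σ _
        rw [hα σ, zero_smul]
      · rintro rfl
        exact ⟨fun _ => 0, by simp, by simp⟩
    · right; left
      push_neg at hα
      obtain ⟨τ, hτ⟩ := hα
      obtain ⟨f, hf⟩ := hK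
      ext X
      simp only [Set.mem_setOf_eq]
      constructor
      · rintro ⟨A, hA, rfl⟩
        intro a b hba
        rcases lt_or_eq_of_le hba with h | h
        · exact sum_tri α A hA a b h
        · subst h
          exact Stmt12Aux.diag_zero α hβ A hA _
      · intro hX
        have hβ' : ∑ σ : Equiv.Perm (Fin 3), α (τ * σ) = 0 := by
          rw [show (fun σ : Equiv.Perm (Fin 3) => α (τ * σ))
              = fun σ : Equiv.Perm (Fin 3) => α ((Equiv.mulLeft τ) σ) from rfl]
          rw [Equiv.sum_comp (Equiv.mulLeft τ) α]
          exact hβ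
        have hα1 : α (τ * 1) ≠ 0 := by rwa [mul_one]
        obtain ⟨A, hA, hXeq⟩ := core f hf (fun σ => α (τ * σ)) hβ' hα1 X hX
        exact transfer α τ X A hA hXeq
end

section
/- The set of commutators of strictly upper triangular matrices spans, and in fact equals, UT_n^{(1)}: {[A,B] : A, B ∈ UT_n^{(0)}} = UT_n^{(1)}. -/
/-!
Products, hence commutators, of strictly upper triangular matrices vanish on the first
superdiagonal. Conversely, with `J` the shift matrix with ones on the first superdiagonal,
`(J * B - B * J) a b = B (a + 1) b - B a (b - 1)`, so `[J, B] = M` becomes a difference equation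
along each diagonal, solved by taking partial sums of `M` along the next diagonal.
-/

open Matrix Finset

namespace Matrix

variable {R : Type*} {n : ℕ}

/-- `strictUpper k` is the paper's `UT_n^{(k)}`: its entries vanish on and below the `k`-th
superdiagonal. -/
def strictUpper [Zero R] (k : ℕ) : Set (Matrix (Fin n) (Fin n) R) :=
  {A | ∀ a b : Fin n, (b : ℕ) ≤ a + k → A a b = 0}

theorem mem_strictUpper_zero_iff [Zero R] {A : Matrix (Fin n) (Fin n) R} :
    A ∈ strictUpper 0 ↔ ∀ a b : Fin n, b ≤ a → A a b = 0 := by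
  simp only [strictUpper, Set.mem_ofPred_eq, add_zero, Fin.val_fin_le]

section Commutator

variable [NonUnitalNonAssocRing R] {k l : ℕ} {A B : Matrix (Fin n) (Fin n) R}

theorem mul_mem_strictUpper (hA : A ∈ strictUpper k) (hB : B ∈ strictUpper l) :
    A * B ∈ strictUpper (k + l + 1) := by
  intro a b hab
  rw [mul_apply]
  refine sum_eq_zero fun c _ => ?_
  rcases le_or_gt (c : ℕ) (a + k) with hc | hc
  · rw [hA a c hc, zero_mul]
  · rw [hB c b (by omega), mul_zero]

theorem commutator_mem_strictUpper (hA : A ∈ strictUpper k) (hB : B ∈ strictUpper l) :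
    A * B - B * A ∈ strictUpper (k + l + 1) := fun a b hab => by
  rw [sub_apply, mul_mem_strictUpper hA hB a b hab,
    mul_mem_strictUpper hB hA a b (by omega), sub_zero]

end Commutator

section Shift

variable [NonAssocSemiring R]

def superdiagShift : Matrix (Fin n) (Fin n) R :=
  of fun a b => if (b : ℕ) = a + 1 then 1 else 0

theorem superdiagShift_mem_strictUpper :
    (superdiagShift : Matrix (Fin n) (Fin n) R) ∈ strictUpper 0 := by
  intro a b hab
  simp only [superdiagShift, of_apply, ite_eq_right_iff]
  omega

theorem superdiagShift_mul_of_apply (g : ℕ → ℕ → R) (a b : Fin n) :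
    (superdiagShift * of fun i j : Fin n => g i j : Matrix (Fin n) (Fin n) R) a b =
      if (a : ℕ) + 1 < n then g (a + 1) b else 0 := by
  simp only [superdiagShift, mul_apply, of_apply, ite_mul, one_mul, zero_mul]
  rw [Fin.sum_univ_eq_sum_range (fun c => if c = (a : ℕ) + 1 then g c b else 0), sum_ite_eq']
  simp

theorem of_mul_superdiagShift_apply (g : ℕ → ℕ → R) (a b : Fin n) :
    ((of fun i j : Fin n => g i j) * superdiagShift : Matrix (Fin n) (Fin n) R) a b =
      if 0 < (b : ℕ) then g a (b - 1) else 0 := by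
  simp only [superdiagShift, mul_apply, of_apply, mul_ite, mul_one, mul_zero]
  rw [Fin.sum_univ_eq_sum_range (fun c => if (b : ℕ) = c + 1 then g a c else 0)]
  split_ifs with hb
  · have hc : ∀ c, ((b : ℕ) = c + 1) ↔ c = b - 1 := by omega
    simp only [hc, sum_ite_eq', mem_range, if_pos (show (b : ℕ) - 1 < n by omega)]
  · exact sum_eq_zero fun c _ => if_neg (by omega)

end Shift

/-- The entry `(a, b)` with `a < b` sums `f` over the first `a` entries of the diagonal
`j - i = b - a + 1`, so that `diagPartialSum_succ_sub` telescopes. -/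
def diagPartialSum [AddCommMonoid R] (f : ℕ → ℕ → R) (a b : ℕ) : R :=
  if a < b then ∑ i ∈ range a, f i (i + (b - a) + 1) else 0

theorem diagPartialSum_succ_sub [AddCommGroup R] (f : ℕ → ℕ → R) {a b : ℕ} (hab : a + 2 ≤ b) :
    diagPartialSum f (a + 1) b - diagPartialSum f a (b - 1) = f a b := by
  have h₁ : ∀ i, i + (b - (a + 1)) + 1 = i + (b - a) := by omega
  have h₂ : ∀ i, i + (b - 1 - a) + 1 = i + (b - a) := by omega
  rw [diagPartialSum, diagPartialSum, if_pos (by omega), if_pos (by omega)]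
  simp only [h₁, h₂]
  rw [sum_range_succ, add_sub_cancel_left, Nat.add_sub_cancel' (by omega)]

def extendByZero [Zero R] (M : Matrix (Fin n) (Fin n) R) (i j : ℕ) : R :=
  if h : i < n ∧ j < n then M ⟨i, h.1⟩ ⟨j, h.2⟩ else 0

@[simp]
theorem extendByZero_val [Zero R] (M : Matrix (Fin n) (Fin n) R) (a b : Fin n) :
    extendByZero M a b = M a b := by
  simp [extendByZero]

theorem exists_superdiagShift_commutator_eq [Ring R] {M : Matrix (Fin n) (Fin n) R}
    (hM : M ∈ strictUpper 1) :
    ∃ B ∈ strictUpper 0, superdiagShift * B - B * superdiagShift = M := by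
  set B : Matrix (Fin n) (Fin n) R := of fun i j : Fin n => diagPartialSum (extendByZero M) i j
  have hB : B ∈ strictUpper 0 := fun a b hab => if_neg (by omega)
  refine ⟨B, hB, ext fun a b => ?_⟩
  by_cases hab : (b : ℕ) ≤ a + 1
  · rw [commutator_mem_strictUpper superdiagShift_mem_strictUpper hB a b hab, hM a b hab]
  · rw [sub_apply, superdiagShift_mul_of_apply, of_mul_superdiagShift_apply,
      if_pos (by omega), if_pos (by omega), diagPartialSum_succ_sub _ (by omega),
      extendByZero_val]

end Matrix

theorem stmt15_general {K : Type*} [Field K] {n : ℕ} :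
    {M : Matrix (Fin n) (Fin n) K | ∃ A B : Matrix (Fin n) (Fin n) K,
        (∀ a b : Fin n, b ≤ a → A a b = 0) ∧ (∀ a b : Fin n, b ≤ a → B a b = 0) ∧
        M = A * B - B * A}
      = {M : Matrix (Fin n) (Fin n) K | ∀ a b : Fin n, (b : ℤ) - (a : ℤ) ≤ 1 → M a b = 0} := by
  ext M
  simp only [Set.mem_ofPred_eq, ← mem_strictUpper_zero_iff]
  constructor
  · rintro ⟨A, B, hA, hB, rfl⟩ a b hab
    exact commutator_mem_strictUpper hA hB a b (by omega)
  · intro hM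
    obtain ⟨B, hB, hMB⟩ := exists_superdiagShift_commutator_eq fun a b hab => hM a b (by omega)
    exact ⟨superdiagShift, B, superdiagShift_mem_strictUpper, hB, hMB.symm⟩

/-- The set of commutators of strictly upper triangular matrices equals
`UT_n^{(1)}`. -/
theorem stmt15 {K : Type*} [Field K] {n : ℕ} (hn : 2 ≤ n) :
    {M : Matrix (Fin n) (Fin n) K | ∃ A B : Matrix (Fin n) (Fin n) K,
        (∀ a b : Fin n, b ≤ a → A a b = 0) ∧ (∀ a b : Fin n, b ≤ a → B a b = 0) ∧
        M = A * B - B * A}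
      = {M : Matrix (Fin n) (Fin n) K | ∀ a b : Fin n, (b : ℤ) - (a : ℤ) ≤ 1 → M a b = 0} :=
  stmt15_general
end

section
/- Let D be a diagonal matrix with pairwise distinct entries and define p(x_1,x_2,x_3,x_4) = [x_1,x_2][x_3,x_4] + [x_3,x_4][x_1,x_2] + [x_2,x_3][x_1,x_4] + [x_1,x_4][x_2,x_3] - [x_1,x_3][x_2,x_4] - [x_2,x_4][x_1,x_3]. Then for all B, C ∈ UT_n, p(D, D², B, C) = [D, [[D,B],[D,C]]], and the image of p on UT_n equals UT_n^{(1)}. -/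
open Matrix

/-- The commutator of matrices. -/
def brkt {K : Type*} [Field K] {n : ℕ} (X Y : Matrix (Fin n) (Fin n) K) :
    Matrix (Fin n) (Fin n) K := X * Y - Y * X

section aux
variable {K : Type*} [Field K] {n : ℕ}

lemma brkt_diag (d : Fin n → K) (M : Matrix (Fin n) (Fin n) K) :
    brkt (Matrix.diagonal d) M = Matrix.of fun a b => (d a - d b) * M a b := by
  ext a b
  simp [brkt, Matrix.diagonal_mul, Matrix.mul_diagonal]
  ring

def vfun (n : ℕ) (g : ℕ → ℕ → K) : ℕ → ℕ → K :=
  fun x y => -∑ t ∈ Finset.range n, g (x + t) (y + 1 + t)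

lemma vfun_eq_zero_of_le (g : ℕ → ℕ → K) (hg0 : ∀ x y, y ≤ x + 1 → g x y = 0)
    (x y : ℕ) (h : y ≤ x) : vfun n g x y = 0 := by
  unfold vfun
  rw [neg_eq_zero]
  exact Finset.sum_eq_zero fun t _ => hg0 _ _ (by omega)

lemma vfun_eq_zero_of_ge (g : ℕ → ℕ → K) (hgn : ∀ x y, n ≤ x → g x y = 0)
    (x y : ℕ) (h : n ≤ x) : vfun n g x y = 0 := by
  unfold vfun
  rw [neg_eq_zero]
  exact Finset.sum_eq_zero fun t _ => hgn _ _ (by omega)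

lemma vfun_telescope (g : ℕ → ℕ → K) (hgn : ∀ x y, n ≤ x → g x y = 0) (x y : ℕ) :
    vfun n g (x + 1) (y + 1) - vfun n g x y = g x (y + 1) := by
  unfold vfun
  have h1 : ∑ t ∈ Finset.range n, g (x + 1 + t) (y + 1 + 1 + t)
      = ∑ t ∈ Finset.range n, (fun t => g (x + t) (y + 1 + t)) (t + 1) :=
    Finset.sum_congr rfl fun t _ => by
      simp only
      rw [show x + 1 + t = x + (t + 1) by omega, show y + 1 + 1 + t = y + 1 + (t + 1) by omega]
  have h2 := Finset.sum_range_succ' (fun t => g (x + t) (y + 1 + t)) n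
  have h3 := Finset.sum_range_succ (fun t => g (x + t) (y + 1 + t)) n
  have h4 : g (x + n) (y + 1 + n) = 0 := hgn _ _ (by omega)
  simp only at h1 h2 h3
  rw [h4, add_zero] at h3
  rw [h1]
  rw [h3] at h2
  have h0 : g (x + 0) (y + 1 + 0) = g x (y + 1) := by norm_num
  rw [h0] at h2
  linear_combination h2

/-- the nilpotent Jordan shift -/
def Jmat (n : ℕ) (K : Type*) [Field K] : Matrix (Fin n) (Fin n) K :=
  Matrix.of fun a b => if (b : ℕ) = (a : ℕ) + 1 then 1 else 0

/-- extension by zero of the matrix Z = ad_D⁻¹(X) to a function on ℕ × ℕ -/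
def gext (d : Fin n → K) (X : Matrix (Fin n) (Fin n) K) : ℕ → ℕ → K :=
  fun x y => if h : x < n ∧ y < n then X ⟨x, h.1⟩ ⟨y, h.2⟩ * (d ⟨x, h.1⟩ - d ⟨y, h.2⟩)⁻¹ else 0

lemma gext_zero_of_le (d : Fin n → K) (X : Matrix (Fin n) (Fin n) K)
    (hX : ∀ a b : Fin n, (b : ℤ) - (a : ℤ) ≤ 1 → X a b = 0)
    (x y : ℕ) (h : y ≤ x + 1) : gext d X x y = 0 := by
  unfold gext
  split
  · next hr =>
    rw [hX ⟨x, hr.1⟩ ⟨y, hr.2⟩ (by simp; omega), zero_mul]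
  · rfl

lemma gext_zero_of_ge (d : Fin n → K) (X : Matrix (Fin n) (Fin n) K)
    (x y : ℕ) (h : n ≤ x) : gext d X x y = 0 := by
  unfold gext
  rw [dif_neg]
  omega

lemma Jmat_mul_apply (V : Matrix (Fin n) (Fin n) K) (a b : Fin n) :
    (Jmat n K * V) a b = if h : (a : ℕ) + 1 < n then V ⟨(a : ℕ) + 1, h⟩ b else 0 := by
  rw [Matrix.mul_apply]
  split
  · next h =>
    rw [Finset.sum_eq_single (⟨(a : ℕ) + 1, h⟩ : Fin n)]
    · simp [Jmat]
    · intro k _ hk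
      have : (k : ℕ) ≠ (a : ℕ) + 1 := fun e => hk (Fin.ext e)
      simp [Jmat, this]
    · simp
  · next h =>
    apply Finset.sum_eq_zero
    intro k _
    have : (k : ℕ) ≠ (a : ℕ) + 1 := by omega
    simp [Jmat, this]

lemma mul_Jmat_apply (V : Matrix (Fin n) (Fin n) K) (a b : Fin n) :
    (V * Jmat n K) a b = if h : 1 ≤ (b : ℕ) then V a ⟨(b : ℕ) - 1, by omega⟩ else 0 := by
  rw [Matrix.mul_apply]
  split
  · next h =>
    rw [Finset.sum_eq_single (⟨(b : ℕ) - 1, by omega⟩ : Fin n)]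
    · simp only [Jmat, Matrix.of_apply]
      rw [if_pos (show (b : ℕ) = ((⟨(b : ℕ) - 1, by omega⟩ : Fin n) : ℕ) + 1 by simp; omega),
        mul_one]
    · intro k _ hk
      have : (b : ℕ) ≠ (k : ℕ) + 1 := by
        intro e
        exact hk (Fin.ext (by simp; omega))
      simp [Jmat, this]
    · simp
  · next h =>
    apply Finset.sum_eq_zero
    intro k _
    have : (b : ℕ) ≠ (k : ℕ) + 1 := by omega
    simp [Jmat, this]

lemma part1 (d : Fin n → K) (B C : Matrix (Fin n) (Fin n) K) :
      brkt (Matrix.diagonal d) ((Matrix.diagonal d) ^ 2) * brkt B C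
        + brkt B C * brkt (Matrix.diagonal d) ((Matrix.diagonal d) ^ 2)
        + brkt ((Matrix.diagonal d) ^ 2) B * brkt (Matrix.diagonal d) C
        + brkt (Matrix.diagonal d) C * brkt ((Matrix.diagonal d) ^ 2) B
        - brkt (Matrix.diagonal d) B * brkt ((Matrix.diagonal d) ^ 2) C
        - brkt ((Matrix.diagonal d) ^ 2) C * brkt (Matrix.diagonal d) B
      = brkt (Matrix.diagonal d) (brkt (brkt (Matrix.diagonal d) B) (brkt (Matrix.diagonal d) C)) := by
  have h2 : (Matrix.diagonal d) ^ 2 = Matrix.diagonal (fun i => d i * d i) := by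
    rw [sq, diagonal_mul_diagonal]
  have hDD : brkt (Matrix.diagonal d) ((Matrix.diagonal d) ^ 2) = 0 := by
    simp [brkt, h2, diagonal_mul_diagonal, mul_comm]
  rw [hDD]; simp only [Matrix.zero_mul, Matrix.mul_zero, zero_add, add_zero]; rw [h2]
  simp only [brkt_diag]
  ext a b
  simp only [brkt, Matrix.sub_apply, Matrix.add_apply, Matrix.mul_apply, Matrix.of_apply]
  rw [← Finset.sum_add_distrib, ← Finset.sum_sub_distrib, ← Finset.sum_sub_distrib,
    ← Finset.sum_sub_distrib, Finset.mul_sum]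
  exact Finset.sum_congr rfl fun k _ => by ring

end aux
section aux2
variable {K : Type*} [Field K] {n : ℕ}

lemma brkt_Jmat_V (d : Fin n → K) (X : Matrix (Fin n) (Fin n) K)
    (hX : ∀ a b : Fin n, (b : ℤ) - (a : ℤ) ≤ 1 → X a b = 0) :
    brkt (Jmat n K) (Matrix.of fun a b : Fin n => vfun n (gext d X) a b)
      = Matrix.of fun a b : Fin n => gext d X a b := by
  set g := gext d X with hg
  have hg0 : ∀ x y, y ≤ x + 1 → g x y = 0 := gext_zero_of_le d X hX
  have hgn : ∀ x y, n ≤ x → g x y = 0 := fun x y h => gext_zero_of_ge d X x y h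
  ext a b
  rw [brkt, Matrix.sub_apply, Jmat_mul_apply, mul_Jmat_apply, Matrix.of_apply]
  have e1 : (if h : (a : ℕ) + 1 < n then
      (Matrix.of fun a b : Fin n => vfun n g a b) ⟨(a : ℕ) + 1, h⟩ b else 0)
      = vfun n g ((a : ℕ) + 1) (b : ℕ) := by
    split
    · rfl
    · next h => rw [vfun_eq_zero_of_ge g hgn _ _ (by omega)]
  rw [e1]
  by_cases hb : 1 ≤ (b : ℕ)
  · rw [dif_pos hb]
    have e2 : ((Matrix.of fun a b : Fin n => vfun n g a b) a ⟨(b : ℕ) - 1, by omega⟩ : K)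
        = vfun n g (a : ℕ) ((b : ℕ) - 1) := rfl
    rw [e2]
    have hb' : (b : ℕ) = ((b : ℕ) - 1) + 1 := by omega
    rw [hb']
    exact vfun_telescope g hgn (a : ℕ) ((b : ℕ) - 1)
  · rw [dif_neg hb, sub_zero]
    have hb0 : (b : ℕ) = 0 := by omega
    rw [hb0, vfun_eq_zero_of_le g hg0 _ _ (by omega), hg0 _ _ (by omega)]

lemma hard_direction (d : Fin n → K) (hd : Function.Injective d)
    (X : Matrix (Fin n) (Fin n) K)
    (hX : ∀ a b : Fin n, (b : ℤ) - (a : ℤ) ≤ 1 → X a b = 0) :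
    ∃ A₁ A₂ A₃ A₄ : Matrix (Fin n) (Fin n) K,
        (∀ a b : Fin n, b < a → A₁ a b = 0) ∧ (∀ a b : Fin n, b < a → A₂ a b = 0) ∧
        (∀ a b : Fin n, b < a → A₃ a b = 0) ∧ (∀ a b : Fin n, b < a → A₄ a b = 0) ∧
        X = brkt A₁ A₂ * brkt A₃ A₄ + brkt A₃ A₄ * brkt A₁ A₂
          + brkt A₂ A₃ * brkt A₁ A₄ + brkt A₁ A₄ * brkt A₂ A₃
          - brkt A₁ A₃ * brkt A₂ A₄ - brkt A₂ A₄ * brkt A₁ A₃ := by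
  set g := gext d X with hgdef
  have hg0 : ∀ x y, y ≤ x + 1 → g x y = 0 := gext_zero_of_le d X hX
  have dne : ∀ a b : Fin n, a ≠ b → d a - d b ≠ 0 := fun a b h =>
    sub_ne_zero.mpr fun e => h (hd e)
  refine ⟨Matrix.diagonal d, (Matrix.diagonal d) ^ 2,
    Matrix.of fun a b : Fin n => Jmat n K a b * (d a - d b)⁻¹,
    Matrix.of fun a b : Fin n => vfun n g a b * (d a - d b)⁻¹,
    ?_, ?_, ?_, ?_, ?_⟩
  · intro a b h
    exact Matrix.diagonal_apply_ne d h.ne'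
  · intro a b h
    rw [sq, Matrix.diagonal_mul_diagonal]
    exact Matrix.diagonal_apply_ne _ h.ne'
  · intro a b h
    have : (b : ℕ) ≠ (a : ℕ) + 1 := by
      have : (b : ℕ) < (a : ℕ) := h
      omega
    simp [Jmat, this]
  · intro a b h
    have : (b : ℕ) ≤ (a : ℕ) := le_of_lt h
    rw [Matrix.of_apply, vfun_eq_zero_of_le g hg0 _ _ this, zero_mul]
  · -- the identity
    rw [part1 d]
    have hDB : brkt (Matrix.diagonal d)
        (Matrix.of fun a b : Fin n => Jmat n K a b * (d a - d b)⁻¹) = Jmat n K := by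
      rw [brkt_diag]
      ext a b
      simp only [Matrix.of_apply, Jmat]
      by_cases h : (b : ℕ) = (a : ℕ) + 1
      · have hne : a ≠ b := by
          intro e
          rw [e] at h
          omega
        rw [if_pos h, one_mul, mul_inv_cancel₀ (dne a b hne)]
      · rw [if_neg h, zero_mul, mul_zero]
    have hDC : brkt (Matrix.diagonal d)
        (Matrix.of fun a b : Fin n => vfun n g a b * (d a - d b)⁻¹)
        = Matrix.of fun a b : Fin n => vfun n g a b := by
      rw [brkt_diag]
      ext a b
      simp only [Matrix.of_apply]
      by_cases h : (b : ℕ) ≤ (a : ℕ)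
      · rw [vfun_eq_zero_of_le g hg0 _ _ h, zero_mul, mul_zero]
      · have hne : a ≠ b := by
          intro e
          rw [e] at h
          omega
        rw [mul_comm (vfun n g (a : ℕ) (b : ℕ)), ← mul_assoc,
          mul_inv_cancel₀ (dne a b hne), one_mul]
    rw [hDB, hDC, brkt_Jmat_V d X hX]
    rw [brkt_diag]
    ext a b
    simp only [Matrix.of_apply]
    by_cases h : a = b
    · subst h
      rw [sub_self, zero_mul]
      exact hX a a (by omega)
    · unfold gext
      rw [dif_pos ⟨a.isLt, b.isLt⟩]
      simp only [Fin.eta]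
      rw [mul_comm (X a b), ← mul_assoc, mul_inv_cancel₀ (dne a b h), one_mul]

/-- commutator of upper triangulars is strictly upper -/
lemma brkt_strict {A B : Matrix (Fin n) (Fin n) K}
    (hA : ∀ a b : Fin n, b < a → A a b = 0) (hB : ∀ a b : Fin n, b < a → B a b = 0)
    (a b : Fin n) (hab : b ≤ a) : brkt A B a b = 0 := by
  simp only [brkt, Matrix.sub_apply, Matrix.mul_apply, ← Finset.sum_sub_distrib]
  apply Finset.sum_eq_zero
  intro k _
  rcases lt_trichotomy k a with h | h | h
  · rw [hA a k h, hB a k h]; ring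
  · subst h
    rcases eq_or_lt_of_le hab with h' | h'
    · subst h'; ring
    · rw [hA k b h', hB k b h']; ring
  · have hkb : b < k := lt_of_le_of_lt hab h
    rw [hA k b hkb, hB k b hkb]; ring

/-- product of strictly uppers vanishes on b ≤ a+1 -/
lemma mul_strict {S T : Matrix (Fin n) (Fin n) K}
    (hS : ∀ a b : Fin n, b ≤ a → S a b = 0) (hT : ∀ a b : Fin n, b ≤ a → T a b = 0)
    (a b : Fin n) (hab : (b : ℤ) - (a : ℤ) ≤ 1) : (S * T) a b = 0 := by
  rw [Matrix.mul_apply]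
  apply Finset.sum_eq_zero
  intro k _
  rcases le_or_gt k a with h | h
  · rw [hS a k h, zero_mul]
  · have : b ≤ k := by
      have h1 : (a : ℕ) < (k : ℕ) := h
      have h2 : (b : ℕ) ≤ (a : ℕ) + 1 := by omega
      have : (b : ℕ) ≤ (k : ℕ) := by omega
      exact this
    rw [hT k b this, mul_zero]

end aux2

/-- For `D` diagonal with pairwise distinct entries and
`p(x₁,x₂,x₃,x₄) = [x₁,x₂][x₃,x₄] + [x₃,x₄][x₁,x₂] + [x₂,x₃][x₁,x₄] + [x₁,x₄][x₂,x₃]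
- [x₁,x₃][x₂,x₄] - [x₂,x₄][x₁,x₃]`, we have `p(D, D², B, C) = [D,[[D,B],[D,C]]]` for all
`B, C ∈ UT_n`, and the image of `p` on `UT_n` is `UT_n^{(1)}`. -/
theorem stmt16 {K : Type*} [Field K] [CharZero K] {n : ℕ} (hn : 2 ≤ n)
    (d : Fin n → K) (hd : Function.Injective d) :
    (∀ B C : Matrix (Fin n) (Fin n) K,
      (∀ a b : Fin n, b < a → B a b = 0) → (∀ a b : Fin n, b < a → C a b = 0) →
      brkt (Matrix.diagonal d) ((Matrix.diagonal d) ^ 2) * brkt B C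
        + brkt B C * brkt (Matrix.diagonal d) ((Matrix.diagonal d) ^ 2)
        + brkt ((Matrix.diagonal d) ^ 2) B * brkt (Matrix.diagonal d) C
        + brkt (Matrix.diagonal d) C * brkt ((Matrix.diagonal d) ^ 2) B
        - brkt (Matrix.diagonal d) B * brkt ((Matrix.diagonal d) ^ 2) C
        - brkt ((Matrix.diagonal d) ^ 2) C * brkt (Matrix.diagonal d) B
      = brkt (Matrix.diagonal d) (brkt (brkt (Matrix.diagonal d) B) (brkt (Matrix.diagonal d) C))) ∧
    ({X : Matrix (Fin n) (Fin n) K | ∃ A₁ A₂ A₃ A₄ : Matrix (Fin n) (Fin n) K,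
        (∀ a b : Fin n, b < a → A₁ a b = 0) ∧ (∀ a b : Fin n, b < a → A₂ a b = 0) ∧
        (∀ a b : Fin n, b < a → A₃ a b = 0) ∧ (∀ a b : Fin n, b < a → A₄ a b = 0) ∧
        X = brkt A₁ A₂ * brkt A₃ A₄ + brkt A₃ A₄ * brkt A₁ A₂
          + brkt A₂ A₃ * brkt A₁ A₄ + brkt A₁ A₄ * brkt A₂ A₃
          - brkt A₁ A₃ * brkt A₂ A₄ - brkt A₂ A₄ * brkt A₁ A₃}
      = {X : Matrix (Fin n) (Fin n) K | ∀ a b : Fin n, (b : ℤ) - (a : ℤ) ≤ 1 → X a b = 0}) := by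
  refine ⟨fun B C _ _ => part1 d B C, ?_⟩
  ext X
  simp only [Set.mem_setOf_eq]
  constructor
  · rintro ⟨A₁, A₂, A₃, A₄, h1, h2, h3, h4, rfl⟩
    intro a b hab
    simp only [Matrix.add_apply, Matrix.sub_apply]
    rw [mul_strict (brkt_strict h1 h2) (brkt_strict h3 h4) a b hab,
        mul_strict (brkt_strict h3 h4) (brkt_strict h1 h2) a b hab,
        mul_strict (brkt_strict h2 h3) (brkt_strict h1 h4) a b hab,
        mul_strict (brkt_strict h1 h4) (brkt_strict h2 h3) a b hab,
        mul_strict (brkt_strict h1 h3) (brkt_strict h2 h4) a b hab,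
        mul_strict (brkt_strict h2 h4) (brkt_strict h1 h3) a b hab]
    ring
  · intro hX
    exact hard_direction d hd X hX
end
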